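/- arXiv:0801.2131 — 15 statements merged into one kernel-verified Lean document; each statement's English description precedes it below -/
import Mathlib

section
/- Let X be a topological space. Then X is scattered if and only if every bijective map f : X → Y from X onto a scattered topological space Y is scatteredly continuous. -/
open Set Topology Filter

/-- A map `f : X → Y` is *scatteredly continuous* if for every non-empty subset `A ⊆ X`
the restriction `f|A` has a point of continuity. -/
def ScatteredlyContinuous {X Y : Type*} [TopologicalSpace X] [TopologicalSpace Y]
    (f : X → Y) : Prop :=
  ∀ A : Set X, A.Nonempty → ∃ a ∈ A, ContinuousWithinAt f A a

/-- A topological space is *scattered* if every non-empty subset has a point isolated in it. -/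
def ScatteredSpace (X : Type*) [TopologicalSpace X] : Prop :=
  ∀ A : Set X, A.Nonempty → ∃ a ∈ A, 𝓝[A \ {a}] a = ⊥

theorem scattered_iff_bijective_to_scattered_scatteredlyContinuous
    {X : Type u} [TopologicalSpace X] :
    ScatteredSpace X ↔
      ∀ (Y : Type u) (_ : TopologicalSpace Y) (f : X → Y),
        ScatteredSpace Y → Function.Bijective f → ScatteredlyContinuous f := by
  constructor
  · intro hX Y tY f _ _ A hA
    obtain ⟨a, haA, ha⟩ := hX A hA
    refine ⟨a, haA, ?_⟩
    have hle : 𝓝[A] a ≤ pure a := by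
      have heq : 𝓝[A] a = 𝓝[A \ {a}] a ⊔ 𝓝[A ∩ {a}] a := by
        rw [← nhdsWithin_union]
        congr 1
        rw [diff_union_inter]
      rw [heq, ha, bot_sup_eq]
      calc 𝓝[A ∩ {a}] a ≤ 𝓝[{a}] a := nhdsWithin_mono a inter_subset_right
        _ ≤ 𝓟 {a} := le_principal_iff.mpr self_mem_nhdsWithin
        _ = pure a := Filter.principal_singleton a
    calc Filter.map f (𝓝[A] a) ≤ Filter.map f (pure a) := Filter.map_mono hle
      _ = pure (f a) := Filter.map_pure f a
      _ ≤ 𝓝 (f a) := pure_le_nhds _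
  · intro h A hA
    have hnd : @nhds X ⊥ = pure := @nhds_discrete X ⊥ (@DiscreteTopology.mk X ⊥ rfl)
    have hY : @ScatteredSpace X ⊥ := by
      intro B hB
      obtain ⟨b, hb⟩ := hB
      refine ⟨b, hb, ?_⟩
      show @nhds X ⊥ b ⊓ 𝓟 (B \ {b}) = ⊥
      rw [hnd]
      refine Filter.inf_principal_eq_bot.mpr ?_
      simp
    have hid : Function.Bijective (id : X → X) := Function.bijective_id
    obtain ⟨a, haA, ha⟩ := h X ⊥ id hY hid A hA
    refine ⟨a, haA, ?_⟩
    have hle : 𝓝[A] a ≤ pure a := by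
      have := ha
      unfold ContinuousWithinAt Filter.Tendsto at this
      rw [Filter.map_id, hnd] at this
      exact this
    refine le_bot_iff.mp ?_
    calc 𝓝[A \ {a}] a ≤ 𝓝[A] a ⊓ 𝓟 (A \ {a}) :=
          le_inf (nhdsWithin_mono a diff_subset) (le_principal_iff.mpr self_mem_nhdsWithin)
      _ ≤ pure a ⊓ 𝓟 (A \ {a}) := inf_le_inf_right _ hle
      _ = ⊥ := by
          rw [← Filter.principal_singleton, Filter.inf_principal, Filter.principal_eq_bot_iff]
          simp
end

section
/- Let X be a topological space of countable tightness and Y any topological space. A map f : X → Y is scatteredly continuous if and only if for every countable subset Q ⊆ X with Q non-empty the restriction f|Q (with the subspace topology on Q) has a point of continuity. -/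
open Set Topology

theorem scatteredlyContinuous_iff_countable_restrictions
    {X Y : Type*} [TopologicalSpace X] [TopologicalSpace Y]
    (htight : ∀ (A : Set X) (a : X), a ∈ closure A →
      ∃ B ⊆ A, B.Countable ∧ a ∈ closure B)
    (f : X → Y) :
    ScatteredlyContinuous f ↔
      ∀ Q : Set X, Q.Countable → Q.Nonempty → ∃ a ∈ Q, ContinuousWithinAt f Q a := by
  constructor
  · intro h Q _ hQne
    exact h Q hQne
  · intro h A hAne
    by_contra hcon
    push_neg at hcon
    have key : ∀ a ∈ A, ∃ (V : Set Y) (B : Set X), V ∈ 𝓝 (f a) ∧ B ⊆ A ∧ B.Countable ∧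
        a ∈ closure B ∧ ∀ x ∈ B, f x ∉ V := by
      intro a ha
      have hna := hcon a ha
      rw [ContinuousWithinAt, Filter.tendsto_def] at hna
      push_neg at hna
      obtain ⟨V, hV, hVn⟩ := hna
      have hcl : a ∈ closure (A ∩ f ⁻¹' Vᶜ) := by
        rw [mem_closure_iff]
        intro o ho hao
        by_contra hemp
        rw [Set.not_nonempty_iff_eq_empty, eq_empty_iff_forall_notMem] at hemp
        apply hVn
        refine mem_nhdsWithin.2 ⟨o, ho, hao, ?_⟩
        intro x hx
        by_contra hfx
        exact hemp x ⟨hx.1, hx.2, hfx⟩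
      obtain ⟨B, hBsub, hBc, hBcl⟩ := htight _ a hcl
      exact ⟨V, B, hV, fun x hx => (hBsub hx).1, hBc, hBcl, fun x hx => (hBsub hx).2⟩
    choose! V B hV hBA hBc hBcl hBV using key
    obtain ⟨a0, ha0⟩ := hAne
    let Q : ℕ → Set X := fun n => Nat.rec {a0} (fun _ Qn => Qn ∪ ⋃ a ∈ Qn, B a) n
    have hQsucc : ∀ n, Q (n + 1) = Q n ∪ ⋃ a ∈ Q n, B a := fun n => rfl
    have hQA : ∀ n, Q n ⊆ A := by
      intro n
      induction n with
      | zero => simpa [Q] using ha0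
      | succ n ih =>
        rw [hQsucc]
        intro x hx
        rcases hx with hx | hx
        · exact ih hx
        · simp only [mem_iUnion] at hx
          obtain ⟨a, ha, hxa⟩ := hx
          exact hBA a (ih ha) hxa
    have hQc : ∀ n, (Q n).Countable := by
      intro n
      induction n with
      | zero => exact countable_singleton a0
      | succ n ih =>
        rw [hQsucc]
        exact ih.union (ih.biUnion fun a ha => hBc a (hQA n ha))
    set T : Set X := ⋃ n, Q n with hT
    have hTA : T ⊆ A := iUnion_subset hQA
    have hTc : T.Countable := countable_iUnion hQc
    have hTne : T.Nonempty := ⟨a0, mem_iUnion.2 ⟨0, rfl⟩⟩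
    have hBT : ∀ a ∈ T, B a ⊆ T := by
      intro a ha
      obtain ⟨n, hn⟩ := mem_iUnion.1 ha
      intro x hx
      refine mem_iUnion.2 ⟨n + 1, ?_⟩
      rw [hQsucc]
      exact Or.inr (mem_iUnion.2 ⟨a, mem_iUnion.2 ⟨hn, hx⟩⟩)
    obtain ⟨a, haT, hc⟩ := h T hTc hTne
    have haA : a ∈ A := hTA haT
    have hfV : f ⁻¹' (V a) ∈ 𝓝[T] a := hc (hV a haA)
    obtain ⟨U, hU, haU, hsub⟩ := mem_nhdsWithin.1 hfV
    have := (mem_closure_iff.1 (hBcl a haA)) U hU haU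
    obtain ⟨x, hxU, hxB⟩ := this
    exact hBV a haA x hxB (hsub ⟨hxU, hBT a haT hxB⟩)
end

section
/- A map f : X → Y between topological spaces is scatteredly continuous if and only if there exist an ordinal β and a family (X_α)_{α ≤ β} of subsets of X such that: X_0 = X; X_β = ∅; X_{α'} ⊆ X_α whenever α ≤ α' ≤ β; X_α = ⋂_{γ < α} X_γ for every limit ordinal α ≤ β; X_{α+1} ≠ X_α for every α < β; and for every α < β the set D(f|X_α) of points of X_α at which the restriction f|X_α (with the subspace topology on X_α) is discontinuous is contained in X_{α+1}. -/
/-!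
Transfinitely iterate "keep only the discontinuity points of the restriction": `X₀ = X`,
`X_{α+1} = D(f|X_α)`, intersections at limits. Scattered continuity says exactly that every
non-empty stage has a continuity point, so the stages strictly decrease until they vanish, which
must happen since ordinals cannot inject into `Set X`. Conversely, given such a series and a
non-empty `A`, the first stage not containing `A` is a successor `α + 1`; a point of `A` outside
`X_{α+1} ⊇ D(f|X_α)` is a continuity point of `f|X_α`, hence of `f|A ⊆ X_α`.
-/

open Set Topology

universe u v

theorem Ordinal.exists_lt_and_not_add_one {p : Ordinal.{u} → Prop} {β : Ordinal.{u}} (h0 : p 0)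
    (hlim : ∀ α ≤ β, Order.IsSuccLimit α → (∀ γ < α, p γ) → p α) (hβ : ¬ p β) :
    ∃ γ < β, p γ ∧ ¬ p (γ + 1) := by
  obtain ⟨α, hα, hmin⟩ := wellFounded_lt.has_min {α | ¬ p α} ⟨β, hβ⟩
  have hαβ : α ≤ β := not_lt.mp fun h => hmin β hβ h
  have hbelow : ∀ γ < α, p γ := fun γ hγ => not_not.mp fun h => hmin γ h hγ
  rcases zero_or_succ_or_isSuccLimit α with rfl | ⟨γ, rfl⟩ | hl
  · exact absurd h0 hα
  · rw [Order.succ_eq_add_one] at hα hαβ hbelow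
    exact ⟨γ, (lt_add_one γ).trans_le hαβ, hbelow γ (lt_add_one γ), hα⟩
  · exact absurd (hlim α hαβ hl hbelow) hα

section DiscontinuitySeries

variable {X : Type u} {Y : Type*} [TopologicalSpace X] [TopologicalSpace Y]

def discontinuitySet (f : X → Y) (A : Set X) : Set X :=
  {x ∈ A | ¬ ContinuousWithinAt f A x}

theorem discontinuitySet_subset (f : X → Y) (A : Set X) : discontinuitySet f A ⊆ A :=
  fun _ hx => hx.1

theorem ScatteredlyContinuous.discontinuitySet_ssubset {f : X → Y}
    (hf : ScatteredlyContinuous f) {A : Set X} (hA : A.Nonempty) : discontinuitySet f A ⊂ A := by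
  obtain ⟨a, ha, hc⟩ := hf A hA
  exact ssubset_of_subset_not_subset (discontinuitySet_subset f A) fun h => (h ha).2 hc

noncomputable def discontinuitySeries (f : X → Y) (α : Ordinal.{u}) : Set X :=
  ⋂ γ, ⋂ _ : γ < α, discontinuitySet f (discontinuitySeries f γ)
termination_by α

theorem discontinuitySeries_eq (f : X → Y) (α : Ordinal.{u}) :
    discontinuitySeries f α = ⋂ γ < α, discontinuitySet f (discontinuitySeries f γ) := by
  rw [discontinuitySeries]

theorem discontinuitySeries_zero (f : X → Y) : discontinuitySeries f 0 = univ := by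
  simp [discontinuitySeries_eq f 0]

theorem discontinuitySeries_antitone (f : X → Y) : Antitone (discontinuitySeries f) := by
  intro γ α h
  rw [discontinuitySeries_eq f α, discontinuitySeries_eq f γ]
  exact biInter_subset_biInter_left fun δ hδ => lt_of_lt_of_le hδ h

theorem discontinuitySeries_add_one (f : X → Y) (α : Ordinal.{u}) :
    discontinuitySeries f (α + 1) = discontinuitySet f (discontinuitySeries f α) := by
  refine Subset.antisymm ?_ fun x hx => ?_
  · rw [discontinuitySeries_eq f (α + 1)]
    exact biInter_subset_of_mem (lt_add_one α)
  · rw [discontinuitySeries_eq f (α + 1)]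
    refine mem_iInter₂.2 fun γ hγ => ?_
    rcases (Order.lt_add_one_iff.mp hγ).lt_or_eq with hlt | rfl
    · have hxα := discontinuitySet_subset f _ hx
      rw [discontinuitySeries_eq f α] at hxα
      exact mem_iInter₂.1 hxα γ hlt
    · exact hx

theorem discontinuitySeries_of_isSuccLimit (f : X → Y) {α : Ordinal.{u}}
    (hα : Order.IsSuccLimit α) : discontinuitySeries f α = ⋂ γ < α, discontinuitySeries f γ := by
  refine Subset.antisymm
    (subset_iInter₂ fun γ hγ => discontinuitySeries_antitone f hγ.le) ?_
  rw [discontinuitySeries_eq f α]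
  refine subset_iInter₂ fun γ hγ => ?_
  rw [← discontinuitySeries_add_one]
  exact biInter_subset_of_mem (hα.add_one_lt hγ)

theorem ScatteredlyContinuous.exists_discontinuitySeries_eq_empty {f : X → Y}
    (hf : ScatteredlyContinuous f) : ∃ α : Ordinal.{u}, discontinuitySeries f α = ∅ := by
  by_contra! hne
  have hanti : StrictAnti (discontinuitySeries f) := fun α γ hlt =>
    calc discontinuitySeries f γ ⊆ discontinuitySeries f (α + 1) :=
          discontinuitySeries_antitone f (Order.add_one_le_of_lt hlt)
      _ = discontinuitySet f (discontinuitySeries f α) := discontinuitySeries_add_one f α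
      _ ⊂ discontinuitySeries f α := hf.discontinuitySet_ssubset (hne α)
  exact not_injective_of_ordinal _ hanti.injective

theorem scatteredlyContinuous_of_series {f : X → Y} {β : Ordinal.{u}} {Xs : Ordinal.{u} → Set X}
    (h0 : Xs 0 = univ) (hβ : Xs β = ∅)
    (hlim : ∀ α ≤ β, Order.IsSuccLimit α → Xs α = ⋂ γ < α, Xs γ)
    (hD : ∀ α < β, discontinuitySet f (Xs α) ⊆ Xs (α + 1)) : ScatteredlyContinuous f := by
  intro A ⟨a, ha⟩
  obtain ⟨γ, hγβ, hAγ, hAγ'⟩ := Ordinal.exists_lt_and_not_add_one (p := fun α => A ⊆ Xs α)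
    (h0 ▸ subset_univ A)
    (fun α hαβ hα hbelow => (hlim α hαβ hα).symm ▸ subset_iInter₂ hbelow)
    (fun h => by simpa [hβ] using h ha)
  obtain ⟨x, hxA, hxγ'⟩ := not_subset.mp hAγ'
  refine ⟨x, hxA, ContinuousWithinAt.mono ?_ hAγ⟩
  by_contra hdisc
  exact hxγ' (hD γ hγβ ⟨hAγ hxA, hdisc⟩)

end DiscontinuitySeries

theorem scatteredlyContinuous_iff_vanishing_series
    {X : Type u} {Y : Type v} [TopologicalSpace X] [TopologicalSpace Y] (f : X → Y) :
    ScatteredlyContinuous f ↔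
      ∃ (β : Ordinal.{u}) (Xs : Ordinal.{u} → Set X),
        Xs 0 = Set.univ ∧
        Xs β = ∅ ∧
        (∀ α α' : Ordinal.{u}, α ≤ α' → α' ≤ β → Xs α' ⊆ Xs α) ∧
        (∀ α : Ordinal.{u}, α ≤ β → Order.IsSuccLimit α → Xs α = ⋂ γ < α, Xs γ) ∧
        (∀ α : Ordinal.{u}, α < β → Xs (α + 1) ≠ Xs α) ∧
        (∀ α : Ordinal.{u}, α < β →
          {x ∈ Xs α | ¬ ContinuousWithinAt f (Xs α) x} ⊆ Xs (α + 1)) := by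
  refine ⟨fun hf => ?_, fun ⟨β, Xs, h0, hβ, _, hlim, _, hD⟩ =>
    scatteredlyContinuous_of_series h0 hβ hlim hD⟩
  let β := sInf {α | discontinuitySeries f α = ∅}
  have hβ : discontinuitySeries f β = ∅ := csInf_mem hf.exists_discontinuitySeries_eq_empty
  refine ⟨β, discontinuitySeries f, discontinuitySeries_zero f, hβ,
    fun α α' h _ => discontinuitySeries_antitone f h,
    fun α _ hα => discontinuitySeries_of_isSuccLimit f hα, fun α hα => ?_,
    fun α _ => (discontinuitySeries_add_one f α).superset⟩
  rw [discontinuitySeries_add_one]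
  exact (hf.discontinuitySet_ssubset (nonempty_iff_ne_empty.2
    (notMem_of_lt_csInf' (s := {α | discontinuitySeries f α = ∅}) hα))).ne
end

section
/- A map f : X → Y between topological spaces is scatteredly continuous if and only if there exists a well-order ≺ on the set X such that for every non-empty subset A ⊆ X the restriction f|A : A → Y (with the subspace topology on A) is continuous at the ≺-least element of A. -/
open Set Topology

/-!
Enumerate `X` transfinitely, at each stage choosing a point of continuity of `f` restricted to
the set of points not yet chosen, and order `X` by the stage at which a point is chosen. The
least element `a` of a set `A` is then chosen from a remainder containing `A`, and continuity at
`a` within that remainder passes to `A`.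
-/

universe u

namespace GreedyEnum

variable {X : Type u} [Nonempty X] {P : Set X → X → Prop}
  (hP : ∀ A : Set X, A.Nonempty → ∃ a ∈ A, P A a)

open Classical in
noncomputable def enum : Ordinal.{u} → X :=
  Ordinal.lt_wf.fix fun α enumBelow =>
    if h : {x | ∀ β (hβ : β < α), enumBelow β hβ ≠ x}.Nonempty then (hP _ h).choose
    else Classical.arbitrary X

def remaining (α : Ordinal.{u}) : Set X :=
  {x | ∀ β < α, enum hP β ≠ x}

theorem enum_spec {α : Ordinal.{u}} (h : (remaining hP α).Nonempty) :
    enum hP α ∈ remaining hP α ∧ P (remaining hP α) (enum hP α) := by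
  have hα : enum hP α = (hP _ h).choose := by
    rw [enum, WellFounded.fix_eq]
    exact dif_pos h
  rw [hα]
  exact (hP _ h).choose_spec

theorem surjective_enum : Function.Surjective (enum hP) := by
  intro x
  by_contra! hx
  have hrem : ∀ α, (remaining hP α).Nonempty := fun α => ⟨x, fun β _ => hx β⟩
  refine not_injective_of_ordinal (enum hP) fun α β hαβ => ?_
  by_contra hne
  rcases lt_or_gt_of_ne hne with h | h
  · exact (enum_spec hP (hrem β)).1 α h hαβ
  · exact (enum_spec hP (hrem α)).1 β h hαβ.symm

noncomputable def rank (x : X) : Ordinal.{u} :=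
  sInf {α | enum hP α = x}

theorem enum_rank (x : X) : enum hP (rank hP x) = x :=
  csInf_mem (surjective_enum hP x)

theorem rank_le {x : X} {α : Ordinal.{u}} (h : enum hP α = x) : rank hP x ≤ α :=
  csInf_le' h

theorem rank_injective : Function.Injective (rank hP) :=
  Function.LeftInverse.injective (enum_rank hP)

theorem subset_remaining_rank {A : Set X} {a : X} (hmin : ∀ b ∈ A, ¬ rank hP b < rank hP a) :
    A ⊆ remaining hP (rank hP a) := fun b hb _ hβ hβb =>
  hmin b hb ((rank_le hP hβb).trans_lt hβ)

end GreedyEnum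

open GreedyEnum in
theorem exists_isWellOrder_forall_min {X : Type u} (P : Set X → X → Prop)
    (hP : ∀ A : Set X, A.Nonempty → ∃ a ∈ A, P A a)
    (hmono : ∀ ⦃A B : Set X⦄ ⦃a : X⦄, A ⊆ B → P B a → P A a) :
    ∃ r : X → X → Prop, IsWellOrder X r ∧
      ∀ A : Set X, ∀ a ∈ A, (∀ b ∈ A, ¬ r b a) → P A a := by
  rcases isEmpty_or_nonempty X with hX | hX
  · exact ⟨WellOrderingRel, inferInstance, fun _ a => isEmptyElim a⟩
  let e : X ↪ Ordinal.{u} := ⟨rank hP, rank_injective hP⟩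
  refine ⟨fun x y => rank hP x < rank hP y, (RelEmbedding.preimage e (· < ·)).isWellOrder,
    fun A a ha hmin => ?_⟩
  have hsub := subset_remaining_rank hP hmin
  have hspec := enum_spec hP ⟨a, hsub ha⟩
  rw [enum_rank] at hspec
  exact hmono hsub hspec.2

theorem scatteredlyContinuous_iff_wellOrder
    {X Y : Type*} [TopologicalSpace X] [TopologicalSpace Y] (f : X → Y) :
    ScatteredlyContinuous f ↔
      ∃ r : X → X → Prop, IsWellOrder X r ∧
        ∀ A : Set X, A.Nonempty →
          ∀ a ∈ A, (∀ b ∈ A, ¬ r b a) → ContinuousWithinAt f A a := by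
  constructor
  · intro hf
    obtain ⟨r, hr, hmin⟩ := exists_isWellOrder_forall_min (fun A a => ContinuousWithinAt f A a)
      hf fun _ _ _ hAB h => h.mono hAB
    exact ⟨r, hr, fun A _ => hmin A⟩
  · rintro ⟨r, hr, hmin⟩ A hA
    exact ⟨hr.wf.min A hA, hr.wf.min_mem A hA,
      hmin A hA _ (hr.wf.min_mem A hA) fun _ hb => hr.wf.not_lt_min A hb⟩
end

section
/- Let f : X → Y and g : Y → Z be maps between topological spaces. If f and g are both weakly discontinuous, then the composition g ∘ f : X → Z is weakly discontinuous. -/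
open Set Topology

/-- A map `f : X → Y` is *weakly discontinuous* if for every non-empty subset `A ⊆ X`
the set of discontinuity points of the restriction `f|A` is nowhere dense in the
subspace `A`. -/
def WeaklyDiscontinuous {X Y : Type*} [TopologicalSpace X] [TopologicalSpace Y]
    (f : X → Y) : Prop :=
  ∀ A : Set X, A.Nonempty →
    IsNowhereDense {a : A | ¬ ContinuousWithinAt f A (a : X)}

/-- Auxiliary property: every nonempty subset has a relatively open nonempty
piece on which the restriction is continuous. -/
def WDAux {X Y : Type*} [TopologicalSpace X] [TopologicalSpace Y] (f : X → Y) : Prop :=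
  ∀ A : Set X, A.Nonempty →
    ∃ x ∈ A, ∃ N ∈ 𝓝 x, ∀ b ∈ A ∩ N, ContinuousWithinAt f A b

lemma weaklyDiscontinuous_of_wdaux {X Y : Type*} [TopologicalSpace X] [TopologicalSpace Y]
    {f : X → Y} (h : WDAux f) : WeaklyDiscontinuous f := by
  intro A hA
  set D : Set A := {a : A | ¬ ContinuousWithinAt f A (a : X)} with hD
  rw [IsNowhereDense, eq_empty_iff_forall_notMem]
  intro a ha
  obtain ⟨t, hts, hto, hat⟩ := mem_interior.mp ha
  obtain ⟨O, hO, rfl⟩ := isOpen_induced_iff.mp hto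
  -- V := A ∩ O is nonempty
  have hVne : (A ∩ O).Nonempty := ⟨a, a.2, hat⟩
  obtain ⟨x, hxV, N, hN, hcont⟩ := h (A ∩ O) hVne
  obtain ⟨N', hN'sub, hN'open, hxN'⟩ := mem_nhds_iff.mp hN
  -- the set S of points of A inside O ∩ N' is open, nonempty, and consists of
  -- continuity points of f|A
  have hScont : ∀ b : A, (b : X) ∈ O ∩ N' → ContinuousWithinAt f A (b : X) := by
    intro b hb
    have hbV : (b : X) ∈ A ∩ O := ⟨b.2, hb.1⟩
    have h1 : ContinuousWithinAt f (A ∩ O) (b : X) := hcont _ ⟨hbV, hN'sub hb.2⟩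
    have : 𝓝[A] (b : X) = 𝓝[A ∩ O] (b : X) :=
      (nhdsWithin_inter_of_mem' (mem_nhdsWithin_of_mem_nhds (hO.mem_nhds hb.1))).symm
    rwa [ContinuousWithinAt, this]
  -- S is open in A and disjoint from D, hence disjoint from closure D
  have hSopen : IsOpen ((Subtype.val : A → X) ⁻¹' (O ∩ N')) :=
    (hO.inter hN'open).preimage continuous_subtype_val
  have hSdisj : (Subtype.val ⁻¹' (O ∩ N')) ∩ D = ∅ := by
    rw [eq_empty_iff_forall_notMem]
    rintro b ⟨hb1, hb2⟩
    exact hb2 (hScont b hb1)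
  have hSclos : (Subtype.val ⁻¹' (O ∩ N')) ∩ closure D = ∅ := by
    rw [eq_empty_iff_forall_notMem]
    rintro b ⟨hb1, hb2⟩
    obtain ⟨c, hc1, hc2⟩ := mem_closure_iff.mp hb2 _ hSopen hb1
    have hcmem : c ∈ (Subtype.val ⁻¹' (O ∩ N')) ∩ D := ⟨hc1, hc2⟩
    rw [hSdisj] at hcmem
    exact hcmem
  -- but the point ⟨x, _⟩ lies in S and in closure D (via t ⊆ closure D)
  have hxA : x ∈ A := hxV.1
  have hxS : (⟨x, hxA⟩ : A) ∈ (Subtype.val ⁻¹' (O ∩ N')) := ⟨hxV.2, hxN'⟩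
  have hxcl : (⟨x, hxA⟩ : A) ∈ closure D := hts hxV.2
  rw [eq_empty_iff_forall_notMem] at hSclos
  exact hSclos _ ⟨hxS, hxcl⟩

lemma wdaux_of_weaklyDiscontinuous {X Y : Type*} [TopologicalSpace X] [TopologicalSpace Y]
    {f : X → Y} (h : WeaklyDiscontinuous f) : WDAux f := by
  intro A hA
  set D : Set A := {a : A | ¬ ContinuousWithinAt f A (a : X)} with hD
  have hnd : interior (closure D) = ∅ := h A hA
  have : ∃ a : A, a ∉ closure D := by
    by_contra hc
    push_neg at hc
    have : closure D = univ := eq_univ_iff_forall.mpr hc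
    rw [this, interior_univ, eq_empty_iff_forall_notMem] at hnd
    obtain ⟨x, hx⟩ := hA
    exact hnd ⟨x, hx⟩ (mem_univ _)
  obtain ⟨a, ha⟩ := this
  have hopen : IsOpen ((closure D)ᶜ) := isClosed_closure.isOpen_compl
  obtain ⟨O, hO, hOeq⟩ := isOpen_induced_iff.mp hopen
  refine ⟨(a : X), a.2, O, hO.mem_nhds ?_, ?_⟩
  · have : a ∈ (Subtype.val : A → X) ⁻¹' O := hOeq ▸ ha
    exact this
  · intro b hb
    have : (⟨b, hb.1⟩ : A) ∈ (closure D)ᶜ := by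
      rw [← hOeq]; exact hb.2
    have hbD : (⟨b, hb.1⟩ : A) ∉ D := fun hd => this (subset_closure hd)
    simpa [hD] using hbD

theorem weaklyDiscontinuous_comp
    {X Y Z : Type*} [TopologicalSpace X] [TopologicalSpace Y] [TopologicalSpace Z]
    (f : X → Y) (g : Y → Z)
    (hf : WeaklyDiscontinuous f) (hg : WeaklyDiscontinuous g) :
    WeaklyDiscontinuous (g ∘ f) := by
  apply weaklyDiscontinuous_of_wdaux
  intro A hA
  obtain ⟨x, hxA, N, hN, hfc⟩ := wdaux_of_weaklyDiscontinuous hf A hA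
  obtain ⟨O₁, hO₁sub, hO₁open, hxO₁⟩ := mem_nhds_iff.mp hN
  set U : Set X := A ∩ O₁ with hU
  have hUcont : ∀ b ∈ U, ContinuousWithinAt f A b := fun b hb => hfc b ⟨hb.1, hO₁sub hb.2⟩
  have hUne : U.Nonempty := ⟨x, hxA, hxO₁⟩
  set B : Set Y := f '' U with hB
  obtain ⟨y, hyB, M, hM, hgc⟩ := wdaux_of_weaklyDiscontinuous hg B (hUne.image f)
  obtain ⟨O₂, hO₂sub, hO₂open, hyO₂⟩ := mem_nhds_iff.mp hM
  obtain ⟨a₀, ha₀U, rfl⟩ := hyB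
  -- f⁻¹ O₂ is a neighborhood of a₀ within A
  have ha₀cont : ContinuousWithinAt f A a₀ := hUcont a₀ ha₀U
  have hpre : f ⁻¹' O₂ ∈ 𝓝[A] a₀ := ha₀cont (hO₂open.mem_nhds hyO₂)
  obtain ⟨N', hN'open, ha₀N', hN'sub⟩ := mem_nhdsWithin.mp hpre
  refine ⟨a₀, ha₀U.1, O₁ ∩ N', (hO₁open.inter hN'open).mem_nhds ⟨ha₀U.2, ha₀N'⟩, ?_⟩
  rintro b ⟨hbA, hbO₁, hbN'⟩
  have hbU : b ∈ U := ⟨hbA, hbO₁⟩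
  have hfb : ContinuousWithinAt f A b := hUcont b hbU
  have hfbO₂ : f b ∈ O₂ := hN'sub ⟨hbN', hbA⟩
  have hgb : ContinuousWithinAt g B (f b) := hgc (f b) ⟨⟨b, hbU, rfl⟩, hO₂sub hfbO₂⟩
  -- f tends into B within A near b
  have htend : Filter.Tendsto f (𝓝[A] b) (𝓝[B] (f b)) := by
    rw [tendsto_nhdsWithin_iff]
    refine ⟨hfb, ?_⟩
    have hUmem : U ∈ 𝓝[A] b :=
      Filter.inter_mem self_mem_nhdsWithin
        (mem_nhdsWithin_of_mem_nhds (hO₁open.mem_nhds hbO₁))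
    filter_upwards [hUmem] with c hc
    exact ⟨c, hc, rfl⟩
  exact (hgb.tendsto.comp htend : Filter.Tendsto (g ∘ f) (𝓝[A] b) _)
end

section
/- Let f : X → Y be a weakly discontinuous map and g : Y → Z a scatteredly continuous map between topological spaces. Then the composition g ∘ f : X → Z is scatteredly continuous. -/
open Set Topology

theorem scatteredlyContinuous_comp_of_weaklyDiscontinuous
    {X Y Z : Type*} [TopologicalSpace X] [TopologicalSpace Y] [TopologicalSpace Z]
    (f : X → Y) (g : Y → Z)
    (hf : WeaklyDiscontinuous f) (hg : ScatteredlyContinuous g) :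
    ScatteredlyContinuous (g ∘ f) := by
  intro A hA
  haveI : Nonempty A := hA.to_subtype
  set D : Set A := {a : A | ¬ ContinuousWithinAt f A (a : X)} with hD
  have hND : IsNowhereDense D := hf A hA
  -- C' : complement of closure of D, open and dense in A
  set C' : Set A := (closure D)ᶜ with hC'
  have hCopen : IsOpen C' := isClosed_closure.isOpen_compl
  have hCdense : Dense C' := by
    rw [hC', ← interior_eq_empty_iff_dense_compl]
    exact hND
  -- get the open set O in X
  obtain ⟨O, hOopen, hOpre⟩ := isOpen_induced_iff.mp hCopen
  -- S : image of C' in X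
  set S : Set X := Subtype.val '' C' with hS
  have hScont : ∀ x ∈ S, ContinuousWithinAt f A x := by
    rintro x ⟨c, hc, rfl⟩
    by_contra h
    exact hc (subset_closure (by exact h))
  have hSne : S.Nonempty := (hCdense.nonempty).image _
  obtain ⟨b, hbS, hgb⟩ := hg (f '' S) (hSne.image f)
  obtain ⟨a, haS, rfl⟩ := hbS
  obtain ⟨c, hc, rfl⟩ := haS
  refine ⟨(c : X), c.2, ?_⟩
  have hcO : (c : X) ∈ O := by
    have : c ∈ Subtype.val ⁻¹' O := hOpre ▸ hc
    exact this
  have hO_nhds : O ∈ 𝓝 (c : X) := hOopen.mem_nhds hcO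
  rw [← continuousWithinAt_inter hO_nhds]
  have hmaps : MapsTo f (A ∩ O) (f '' S) := by
    rintro x ⟨hxA, hxO⟩
    exact mem_image_of_mem f ⟨⟨x, hxA⟩, show (⟨x, hxA⟩ : A) ∈ C' from hOpre ▸ hxO, rfl⟩
  have hfc : ContinuousWithinAt f (A ∩ O) (c : X) :=
    (hScont _ ⟨c, hc, rfl⟩).mono inter_subset_left
  exact hgb.comp hfc hmaps
end

section
/- Let X be a topological space and Y a regular topological space. A map f : X → Y is scatteredly continuous if and only if f is weakly discontinuous. -/
open Set Topology

theorem scatteredlyContinuous_iff_weaklyDiscontinuous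
    {X Y : Type*} [TopologicalSpace X] [TopologicalSpace Y] [RegularSpace Y]
    (f : X → Y) :
    ScatteredlyContinuous f ↔ WeaklyDiscontinuous f := by
  constructor
  · -- scatteredly continuous → weakly discontinuous
    intro hsc A hA
    by_contra hND
    set S : Set A := {a : A | ¬ ContinuousWithinAt f A (a : X)} with hSdef
    set D : Set X := {x : X | x ∈ A ∧ ¬ ContinuousWithinAt f A x} with hDdef
    have hvalS : (Subtype.val '' S : Set X) = D := by
      ext x
      constructor
      · rintro ⟨a, ha, rfl⟩; exact ⟨a.2, ha⟩
      · rintro ⟨hxA, hx⟩; exact ⟨⟨x, hxA⟩, hx, rfl⟩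
    have hne : (interior (closure S)).Nonempty := nonempty_iff_ne_empty.mpr hND
    obtain ⟨O, hO, hOeq⟩ := isOpen_induced_iff.mp (isOpen_interior (s := closure S))
    -- every point of A ∩ O lies in the closure of D
    have hclo : ∀ x ∈ A ∩ O, x ∈ closure D := by
      rintro x ⟨hxA, hxO⟩
      have h1 : (⟨x, hxA⟩ : A) ∈ interior (closure S) := by
        rw [← hOeq]; exact hxO
      have h2 : (⟨x, hxA⟩ : A) ∈ closure S := interior_subset h1
      rw [closure_subtype] at h2
      rwa [hvalS] at h2
    obtain ⟨b0, hb0⟩ := hne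
    have hb0O : (b0 : X) ∈ O := by
      have := hb0; rw [← hOeq] at this; exact this
    have hBne : (D ∩ O).Nonempty := by
      have h1 : (b0 : X) ∈ closure D := hclo b0 ⟨b0.2, hb0O⟩
      rw [mem_closure_iff] at h1
      obtain ⟨y, hy1, hy2⟩ := h1 O hO hb0O
      exact ⟨y, hy2, hy1⟩
    obtain ⟨b, hbBO, hbC⟩ := hsc (D ∩ O) hBne
    have hbD : b ∈ D := hbBO.1
    have hbO : b ∈ O := hbBO.2
    apply hbD.2
    -- show ContinuousWithinAt f A b
    rw [ContinuousWithinAt, Filter.tendsto_def]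
    intro V hV
    obtain ⟨s, hsnhds, hsclosed, hsV⟩ := exists_mem_nhds_isClosed_subset hV
    have hpre : f ⁻¹' s ∈ 𝓝[D ∩ O] b := hbC hsnhds
    rw [mem_nhdsWithin] at hpre
    obtain ⟨W₀, hW₀open, hbW₀, hsub⟩ := hpre
    -- hsub : W₀ ∩ (D ∩ O) ⊆ f ⁻¹' s
    have key : ∀ a ∈ (W₀ ∩ O) ∩ A, f a ∈ V := by
      rintro a ⟨⟨haW₀, haO⟩, haA⟩
      by_cases haD : a ∈ D
      · exact hsV (hsub ⟨haW₀, haD, haO⟩)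
      · have haC : ContinuousWithinAt f A a := by
          by_contra h; exact haD ⟨haA, h⟩
        have haclo : a ∈ closure (D ∩ (W₀ ∩ O)) := by
          have h1 : a ∈ closure D := hclo a ⟨haA, haO⟩
          rw [mem_closure_iff] at h1 ⊢
          intro N hN haN
          obtain ⟨y, hy1, hy2⟩ :=
            h1 (N ∩ (W₀ ∩ O)) (hN.inter (hW₀open.inter hO)) ⟨haN, haW₀, haO⟩
          exact ⟨y, hy1.1, hy2, hy1.2⟩
        haveI hNB : (𝓝[D ∩ (W₀ ∩ O)] a).NeBot :=
          mem_closure_iff_nhdsWithin_neBot.mp haclo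
        have htends : Filter.Tendsto f (𝓝[D ∩ (W₀ ∩ O)] a) (𝓝 (f a)) :=
          haC.mono_left (nhdsWithin_mono a (fun x hx => hx.1.1))
        have hev : ∀ᶠ x in 𝓝[D ∩ (W₀ ∩ O)] a, f x ∈ s := by
          filter_upwards [self_mem_nhdsWithin] with x hx
          exact hsub ⟨hx.2.1, hx.1, hx.2.2⟩
        have hmem : f a ∈ closure s := mem_closure_of_tendsto htends hev
        exact hsV (hsclosed.closure_subset hmem)
    rw [mem_nhdsWithin]
    exact ⟨W₀ ∩ O, hW₀open.inter hO, ⟨hbW₀, hbO⟩,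
      fun a ha => key a ⟨ha.1, ha.2⟩⟩
  · -- weakly discontinuous → scatteredly continuous
    intro hwd A hA
    have h := hwd A hA
    by_contra hc
    push_neg at hc
    haveI := hA.to_subtype
    have hS : {a : A | ¬ ContinuousWithinAt f A (a : X)} = Set.univ := by
      ext a; simpa using hc a a.2
    have h' : interior (closure {a : A | ¬ ContinuousWithinAt f A (a : X)}) = ∅ := h
    rw [hS, closure_univ, interior_univ] at h'
    exact (univ_nonempty).ne_empty h'
end

section
/- Let f : X → Y and g : Y → Z be scatteredly continuous maps between topological spaces, where Y is a regular space. Then the composition g ∘ f : X → Z is scatteredly continuous. -/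
open Set Topology

theorem scatteredlyContinuous_comp
    {X Y Z : Type*} [TopologicalSpace X] [TopologicalSpace Y] [TopologicalSpace Z]
    [RegularSpace Y]
    (f : X → Y) (g : Y → Z)
    (hf : ScatteredlyContinuous f) (hg : ScatteredlyContinuous g) :
    ScatteredlyContinuous (g ∘ f) := by
  intro A hA
  set D : Set X := {x ∈ A | ¬ ContinuousWithinAt f A x} with hDdef
  -- Step 1: D is not dense in A (uses regularity of Y).
  have hnd : ¬ A ⊆ closure D := by
    intro hdense
    have hDne : D.Nonempty := by
      rcases hA with ⟨x, hx⟩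
      by_contra h
      rw [Set.not_nonempty_iff_eq_empty] at h
      have hx' := hdense hx
      rw [h, closure_empty] at hx'
      exact hx'
    obtain ⟨a, haD, hca⟩ := hf D hDne
    have haA : a ∈ A := haD.1
    have hdisc : ¬ ContinuousWithinAt f A a := haD.2
    rw [ContinuousWithinAt, Filter.tendsto_def] at hdisc
    push_neg at hdisc
    obtain ⟨W, hW, hWnot⟩ := hdisc
    obtain ⟨V, hV, hVc, hVW⟩ := exists_mem_nhds_isClosed_subset hW
    obtain ⟨N₀, hN₀o, haN₀, hN₀⟩ := mem_nhdsWithin.1 (hca.preimage_mem_nhdsWithin hV)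
    have hx : ∃ x ∈ N₀ ∩ A, f x ∉ W := by
      by_contra h
      push_neg at h
      apply hWnot
      filter_upwards [Filter.inter_mem
        (mem_nhdsWithin_of_mem_nhds (hN₀o.mem_nhds haN₀)) self_mem_nhdsWithin] with y hy
      exact h y hy
    obtain ⟨x, ⟨hxN₀, hxA⟩, hxW⟩ := hx
    have hxc : ContinuousWithinAt f A x := by
      by_contra h
      exact hxW (hVW (hN₀ ⟨hxN₀, ⟨hxA, h⟩⟩))
    have hVc' : Vᶜ ∈ 𝓝 (f x) := hVc.isOpen_compl.mem_nhds (fun h => hxW (hVW h))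
    obtain ⟨M, hMo, hxM, hM⟩ := mem_nhdsWithin.1 (hxc.preimage_mem_nhdsWithin hVc')
    obtain ⟨d, hd⟩ := (mem_closure_iff.1 (hdense hxA)) (M ∩ N₀) (hMo.inter hN₀o) ⟨hxM, hxN₀⟩
    exact hM ⟨hd.1.1, hd.2.1⟩ (hN₀ ⟨hd.1.2, hd.2⟩)
  -- Step 2: build the relatively open set of continuity points.
  obtain ⟨a₀, ha₀A, ha₀⟩ := not_subset.1 hnd
  set U : Set X := A ∩ (closure D)ᶜ with hUdef
  have hUne : U.Nonempty := ⟨a₀, ha₀A, ha₀⟩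
  have hUcont : ∀ u ∈ U, ContinuousWithinAt f A u := by
    intro u hu
    by_contra h
    exact hu.2 (subset_closure ⟨hu.1, h⟩)
  obtain ⟨b, ⟨a, haU, rfl⟩, hb⟩ := hg (f '' U) (hUne.image f)
  refine ⟨a, haU.1, ?_⟩
  have hfa : ContinuousWithinAt f U a := (hUcont a haU).mono inter_subset_left
  have h2 : ContinuousWithinAt (g ∘ f) U a := hb.comp hfa (mapsTo_image f U)
  exact h2.mono_of_mem_nhdsWithin
    (inter_mem_nhdsWithin A ((isClosed_closure.isOpen_compl).mem_nhds haU.2))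
end

section
/- A map f : X → Y between topological spaces is weakly discontinuous if and only if there exist an ordinal β and a family (X_α)_{α ≤ β} of closed subsets of X such that: X_0 = X; X_β = ∅; X_{α'} ⊆ X_α whenever α ≤ α' ≤ β; X_α = ⋂_{γ < α} X_γ for every limit ordinal α ≤ β; X_{α+1} ≠ X_α for every α < β; and for every α < β the set D(f|X_α) of points of X_α at which the restriction f|X_α (with the subspace topology on X_α) is discontinuous is contained in X_{α+1}. -/
open Set Topology

universe u v

/-!
Both directions go through a reformulation: `f` is weakly discontinuous iff no non-empty `A`
lies in the closure of the discontinuity set of `f|A`.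

Forward, iterate `A ↦ A ∩ closure {x ∈ A | f|A is discontinuous at x}` transfinitely from
`univ`, intersecting at limits. The iterates are closed and decreasing, and the reformulation
makes the decrease strict while they are non-empty; as the ordinals do not inject into `Set X`,
some iterate is empty, and the first such index is `β`.

Backward, a non-empty `A` satisfies `A ⊆ X_γ` and `A ⊄ X_{γ+1}` for some `γ`. The open set
`X_{γ+1}ᶜ` meets `A`, and on it every point of `A` is a continuity point of `f|X_γ`, hence of
`f|A`; so `A` is not contained in the closure of the discontinuity set of `f|A`.
-/

open OrderDual

namespace Set

variable {X : Type*} (F : Set X → Set X)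

/-- Iterating `F` from `univ` in the order dual of `Set X` turns the suprema that
`transfiniteIterate` takes at limit stages into intersections. -/
noncomputable def transfiniteIterateInter (o : Ordinal) : Set X :=
  ofDual (transfiniteIterate (toDual ∘ F ∘ ofDual) o (toDual univ))

theorem transfiniteIterateInter_zero : transfiniteIterateInter F 0 = univ := by
  rw [transfiniteIterateInter, ← Ordinal.bot_eq_zero, transfiniteIterate_bot]
  rfl

theorem transfiniteIterateInter_add_one (o : Ordinal) :
    transfiniteIterateInter F (o + 1) = F (transfiniteIterateInter F o) := by
  rw [transfiniteIterateInter, ← Order.succ_eq_add_one,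
    transfiniteIterate_succ _ _ _ (not_isMax o)]
  rfl

theorem transfiniteIterateInter_of_isSuccLimit {o : Ordinal} (ho : Order.IsSuccLimit o) :
    transfiniteIterateInter F o = ⋂ γ < o, transfiniteIterateInter F γ := by
  rw [transfiniteIterateInter, transfiniteIterate_limit _ _ _ ho, ofDual_iSup]
  exact iInter_subtype (· < o) _

variable {F}

theorem antitone_transfiniteIterateInter (hF : ∀ s, F s ⊆ s) :
    Antitone (transfiniteIterateInter F) := fun _ _ hab =>
  monotone_transfiniteIterate (toDual ∘ F ∘ ofDual) _ hF hab

theorem isClosed_transfiniteIterateInter [TopologicalSpace X]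
    (hF : ∀ s, IsClosed s → IsClosed (F s)) (o : Ordinal) :
    IsClosed (transfiniteIterateInter F o) := by
  induction o using Ordinal.limitRecOn with
  | zero => rw [transfiniteIterateInter_zero]; exact isClosed_univ
  | add_one o ih => rw [transfiniteIterateInter_add_one]; exact hF _ ih
  | limit o ho ih =>
    rw [transfiniteIterateInter_of_isSuccLimit F ho]
    exact isClosed_biInter ih

theorem exists_transfiniteIterateInter_eq_empty {X : Type u} {F : Set X → Set X}
    (hF : ∀ s, F s ⊆ s) (hF_ne : ∀ s, s.Nonempty → F s ≠ s) :
    ∃ o : Ordinal.{u}, transfiniteIterateInter F o = ∅ :=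
  top_mem_range_transfiniteIterate (toDual ∘ F ∘ ofDual) (toDual univ)
    (fun _ hs => (hF _).ssubset_of_ne (hF_ne _ (nonempty_iff_ne_empty.2 hs)))
    (subset_empty_iff.1 (hF ∅)) (not_injective_of_ordinal _)

theorem exists_subset_and_not_subset_add_one {Xs : Ordinal → Set X} {β : Ordinal}
    (h0 : Xs 0 = univ) (hβ : Xs β = ∅)
    (hlim : ∀ α ≤ β, Order.IsSuccLimit α → Xs α = ⋂ γ < α, Xs γ) {U : Set X}
    (hU : U.Nonempty) : ∃ γ < β, U ⊆ Xs γ ∧ ¬ U ⊆ Xs (γ + 1) := by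
  by_contra! hstep
  have hsub : ∀ o ≤ β, U ⊆ Xs o := by
    intro o
    induction o using Ordinal.limitRecOn with
    | zero => exact fun _ => h0 ▸ subset_univ U
    | add_one o ih =>
      intro ho
      have hoβ : o < β := Order.add_one_le_iff.1 ho
      exact hstep o hoβ (ih hoβ.le)
    | limit o ho ih =>
      intro hoβ
      rw [hlim o hoβ ho]
      exact subset_iInter₂ fun γ hγ => ih γ hγ (hγ.le.trans hoβ)
  exact hU.ne_empty (subset_empty_iff.1 (hβ ▸ hsub β le_rfl))

end Set

section WeaklyDiscontinuous

variable {X Y : Type*} [TopologicalSpace X] [TopologicalSpace Y] {f : X → Y}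

theorem weaklyDiscontinuous_iff_not_subset_closure :
    WeaklyDiscontinuous f ↔
      ∀ A : Set X, A.Nonempty → ¬ A ⊆ closure {x ∈ A | ¬ ContinuousWithinAt f A x} := by
  have hclosure (A : Set X) (a : A) :
      a ∈ closure {a : A | ¬ ContinuousWithinAt f A a} ↔
        (a : X) ∈ closure {x ∈ A | ¬ ContinuousWithinAt f A x} := by
    rw [closure_subtype]
    exact Subtype.image_preimage_coe A {x | ¬ ContinuousWithinAt f A x} ▸ Iff.rfl
  constructor
  · intro hf A hA hAD
    have : Nonempty A := hA.to_subtype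
    have hdense : Dense {a : A | ¬ ContinuousWithinAt f A a} :=
      fun a => (hclosure A a).2 (hAD a.2)
    have hnowhere := hf A hA
    rw [IsNowhereDense, hdense.closure_eq, interior_univ] at hnowhere
    exact univ_nonempty.ne_empty hnowhere
  · intro h A hA
    by_contra! hint
    obtain ⟨v, hv⟩ := nonempty_iff_ne_empty.2 hint
    obtain ⟨O, hO, hOeq⟩ := isOpen_induced_iff.1 (isOpen_interior (s := closure
      {a : A | ¬ ContinuousWithinAt f A a}))
    rw [← hOeq] at hv
    -- inside the open set `O`, `f|(A ∩ O)` and `f|A` have the same discontinuity points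
    refine h (A ∩ O) ⟨v, v.2, hv⟩ fun x ⟨hxA, hxO⟩ => ?_
    have hx : x ∈ closure {x ∈ A | ¬ ContinuousWithinAt f A x} :=
      (hclosure A ⟨x, hxA⟩).1 (interior_subset (hOeq ▸ hxO))
    refine closure_mono ?_ (hO.inter_closure ⟨hxO, hx⟩)
    rintro y ⟨hyO, hyA, hy⟩
    exact ⟨⟨hyA, hyO⟩, fun hcont =>
      hy ((continuousWithinAt_inter (hO.mem_nhds hyO)).1 hcont)⟩

variable (f) in
/-- Intersecting with `A` makes this operator shrink every set, not only closed ones. -/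
def discontinuityDerivedSet (A : Set X) : Set X :=
  A ∩ closure {x ∈ A | ¬ ContinuousWithinAt f A x}

theorem discontinuityDerivedSet_subset (A : Set X) : discontinuityDerivedSet f A ⊆ A :=
  inter_subset_left

theorem IsClosed.discontinuityDerivedSet {A : Set X} (hA : IsClosed A) :
    IsClosed (discontinuityDerivedSet f A) :=
  hA.inter isClosed_closure

theorem subset_discontinuityDerivedSet {A : Set X} :
    {x ∈ A | ¬ ContinuousWithinAt f A x} ⊆ discontinuityDerivedSet f A :=
  fun _ hx => ⟨hx.1, subset_closure hx⟩

theorem WeaklyDiscontinuous.discontinuityDerivedSet_ne (hf : WeaklyDiscontinuous f)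
    {A : Set X} (hA : A.Nonempty) : discontinuityDerivedSet f A ≠ A := fun h =>
  weaklyDiscontinuous_iff_not_subset_closure.1 hf A hA (inter_eq_left.1 h)

theorem weaklyDiscontinuous_of_closed_vanishing_series {Xs : Ordinal → Set X} {β : Ordinal}
    (hcl : ∀ α ≤ β, IsClosed (Xs α)) (h0 : Xs 0 = univ) (hβ : Xs β = ∅)
    (hlim : ∀ α ≤ β, Order.IsSuccLimit α → Xs α = ⋂ γ < α, Xs γ)
    (hdisc : ∀ α < β, {x ∈ Xs α | ¬ ContinuousWithinAt f (Xs α) x} ⊆ Xs (α + 1)) :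
    WeaklyDiscontinuous f := by
  refine weaklyDiscontinuous_iff_not_subset_closure.2 fun A hA hAD => ?_
  obtain ⟨γ, hγβ, hAγ, hAγ₁⟩ := exists_subset_and_not_subset_add_one h0 hβ hlim hA
  obtain ⟨a, haA, ha⟩ := not_subset.1 hAγ₁
  have hopen : IsOpen (Xs (γ + 1))ᶜ := (hcl _ (Order.add_one_le_of_lt hγβ)).isOpen_compl
  obtain ⟨y, hy, hyA, hy_disc⟩ := mem_closure_iff.1 (hAD haA) _ hopen ha
  exact hy (hdisc γ hγβ ⟨hAγ hyA, fun hcont => hy_disc (hcont.mono hAγ)⟩)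

end WeaklyDiscontinuous

theorem weaklyDiscontinuous_iff_closed_vanishing_series
    {X : Type u} {Y : Type v} [TopologicalSpace X] [TopologicalSpace Y] (f : X → Y) :
    WeaklyDiscontinuous f ↔
      ∃ (β : Ordinal.{u}) (Xs : Ordinal.{u} → Set X),
        (∀ α : Ordinal.{u}, α ≤ β → IsClosed (Xs α)) ∧
        Xs 0 = Set.univ ∧
        Xs β = ∅ ∧
        (∀ α α' : Ordinal.{u}, α ≤ α' → α' ≤ β → Xs α' ⊆ Xs α) ∧
        (∀ α : Ordinal.{u}, α ≤ β → Order.IsSuccLimit α → Xs α = ⋂ γ < α, Xs γ) ∧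
        (∀ α : Ordinal.{u}, α < β → Xs (α + 1) ≠ Xs α) ∧
        (∀ α : Ordinal.{u}, α < β →
          {x ∈ Xs α | ¬ ContinuousWithinAt f (Xs α) x} ⊆ Xs (α + 1)) := by
  constructor
  · intro hf
    set Xs := transfiniteIterateInter (discontinuityDerivedSet f)
    have hvanish : ∃ o, Xs o = ∅ := exists_transfiniteIterateInter_eq_empty
      discontinuityDerivedSet_subset fun _ => hf.discontinuityDerivedSet_ne
    refine ⟨sInf {o | Xs o = ∅}, Xs,
      fun α _ => isClosed_transfiniteIterateInter (fun _ => IsClosed.discontinuityDerivedSet) α,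
      transfiniteIterateInter_zero _, csInf_mem hvanish,
      fun α α' h _ => antitone_transfiniteIterateInter discontinuityDerivedSet_subset h,
      fun α _ => transfiniteIterateInter_of_isSuccLimit _, fun α hα => ?_, fun α _ => ?_⟩
    · exact (transfiniteIterateInter_add_one _ α).trans_ne
        (hf.discontinuityDerivedSet_ne (nonempty_iff_ne_empty.2 (notMem_of_lt_csInf' hα ·)))
    · exact subset_discontinuityDerivedSet.trans (transfiniteIterateInter_add_one _ α).superset
  · rintro ⟨β, Xs, hcl, h0, hβ, -, hlim, -, hdisc⟩
    exact weaklyDiscontinuous_of_closed_vanishing_series hcl h0 hβ hlim hdisc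
end

section
/- Let f : X → Y be a weakly discontinuous map between topological spaces and let κ be an infinite cardinal such that: (i) every closed subset of X is the intersection of a family of at most κ open subsets of X; and (ii) every open cover U of X admits a refinement consisting of closed subsets of X covering X that can be written as a union of at most κ many families of closed subsets of X, each family locally finite in X, where each member of the refinement is contained in some member of U. Then there exists a cover C of X by closed subsets with |C| ≤ κ such that the restriction f|C is continuous for every C ∈ C. -/
/-!
Let `D⁰ = X`, `D^(α+1)` the closure of the set of discontinuity points of `f|D^α`, and
`D^α = ⋂_{β<α} D^(β+1)` at limits. Weak discontinuity makes this sequence strictly decreasing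
until it is empty. By induction on `α`, every closed `t` missing `D^α` is covered by `κ` closed
sets on each of which `f` is continuous. At a successor `α = β + 1`, `f` is continuous on
`t ∩ D^β`, and by (i) the rest of `t` is covered by `κ` closed sets missing `D^β`. At a limit,
(ii) refines the open cover of `t` by the complements of the `D^(β+1)`, `β < α`, into `κ`
locally finite closed families; the pieces of a locally finite family glue to a closed set on
which `f` is still continuous.
-/

open Set Topology

universe u v

open scoped Cardinal

section

variable {X : Type u} {Y : Type v} [TopologicalSpace X] [TopologicalSpace Y] {f : X → Y}

variable (f) in
def discDeriv (A : Set X) : Set X := closure {x ∈ A | ¬ ContinuousWithinAt f A x}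

theorem discDeriv_mono {A B : Set X} (h : A ⊆ B) : discDeriv f A ⊆ discDeriv f B :=
  closure_mono fun _ hx => ⟨h hx.1, fun hc => hx.2 (hc.mono h)⟩

theorem continuousWithinAt_of_notMem_discDeriv {A : Set X} {x : X} (hx : x ∈ A)
    (hx' : x ∉ discDeriv f A) : ContinuousWithinAt f A x :=
  by_contra fun h => hx' (subset_closure ⟨hx, h⟩)

theorem WeaklyDiscontinuous.discDeriv_ne (hf : WeaklyDiscontinuous f) {A : Set X}
    (hA : A.Nonempty) : discDeriv f A ≠ A := by
  intro h
  have : Nonempty A := hA.to_subtype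
  have himage : ((↑) : A → X) '' {a : A | ¬ ContinuousWithinAt f A (a : X)}
      = {x ∈ A | ¬ ContinuousWithinAt f A x} := by
    ext x
    simp [and_comm]
  have hdense : closure {a : A | ¬ ContinuousWithinAt f A (a : X)} = univ :=
    eq_univ_of_forall fun a => by
      rw [closure_subtype, himage]
      exact h.ge a.2
  have hnd := hf A hA
  rw [IsNowhereDense, hdense, interior_univ] at hnd
  exact univ_nonempty.ne_empty hnd

variable (f) in
noncomputable def discDerivSeq : Ordinal.{u} → Set X :=
  WellFoundedLT.fix fun α ih => ⋂ β : Iio α, discDeriv f (ih β β.2)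

theorem discDerivSeq_eq (α : Ordinal.{u}) :
    discDerivSeq f α = ⋂ β : Iio α, discDeriv f (discDerivSeq f β) :=
  WellFoundedLT.fix_eq _ α

theorem isClosed_discDerivSeq (α : Ordinal.{u}) : IsClosed (discDerivSeq f α) := by
  rw [discDerivSeq_eq]
  exact isClosed_iInter fun _ => isClosed_closure

theorem discDerivSeq_antitone : Antitone (discDerivSeq f) := fun α γ h => by
  rw [discDerivSeq_eq (f := f) α, discDerivSeq_eq (f := f) γ]
  exact iInter_mono' fun β => ⟨⟨β, β.2.trans_le h⟩, subset_rfl⟩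

theorem discDerivSeq_add_one (α : Ordinal.{u}) :
    discDerivSeq f (α + 1) = discDeriv f (discDerivSeq f α) := by
  rw [discDerivSeq_eq (f := f) (α + 1)]
  refine subset_antisymm (iInter_subset _ (⟨α, lt_add_one α⟩ : Iio (α + 1))) ?_
  exact subset_iInter fun β => discDeriv_mono (discDerivSeq_antitone (Order.lt_add_one_iff.1 β.2))

theorem discDerivSeq_eq_iInter_add_one (α : Ordinal.{u}) :
    discDerivSeq f α = ⋂ β : Iio α, discDerivSeq f (β + 1) := by
  simp only [discDerivSeq_add_one]
  exact discDerivSeq_eq α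

theorem WeaklyDiscontinuous.exists_discDerivSeq_eq_empty (hf : WeaklyDiscontinuous f) :
    ∃ δ : Ordinal.{u}, discDerivSeq f δ = ∅ := by
  by_contra! hne
  have hssub (α : Ordinal.{u}) : discDerivSeq f (α + 1) ⊂ discDerivSeq f α := by
    rw [discDerivSeq_add_one]
    refine ssubset_of_subset_of_ne ?_ (hf.discDeriv_ne (hne α))
    exact closure_minimal (fun _ hx => hx.1) (isClosed_discDerivSeq α)
  have hanti : StrictAnti (discDerivSeq f) := fun α γ h =>
    (discDerivSeq_antitone (Order.add_one_le_of_lt h)).trans_ssubset (hssub α)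
  exact not_injective_of_ordinal _ hanti.injective

variable (f) in
def IsClosedDecomposable (I : Type*) (s : Set X) : Prop :=
  ∃ C : I → Set X, (∀ i, IsClosed (C i)) ∧ (∀ i, ContinuousOn f (C i)) ∧ s ⊆ ⋃ i, C i

theorem isClosedDecomposable_of_continuousOn {I : Type*} [Nonempty I] {s : Set X}
    (hs : IsClosed s) (hf : ContinuousOn f s) : IsClosedDecomposable f I s :=
  ⟨fun _ => s, fun _ => hs, fun _ => hf, subset_iUnion_of_subset (Classical.arbitrary I) subset_rfl⟩

theorem isClosedDecomposable_empty {I : Type*} : IsClosedDecomposable f I ∅ :=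
  ⟨fun _ => ∅, fun _ => isClosed_empty, fun _ => continuousOn_empty f, empty_subset _⟩

theorem IsClosedDecomposable.of_mk_le {I J : Type u} {s : Set X}
    (h : IsClosedDecomposable f I s) (hIJ : #I ≤ #J) : IsClosedDecomposable f J s := by
  obtain ⟨C, hC, hfC, hsC⟩ := h
  obtain ⟨e⟩ := Cardinal.le_def I J |>.1 hIJ
  rcases isEmpty_or_nonempty I with hI | hI
  · exact ⟨fun _ => ∅, fun _ => isClosed_empty, fun _ => continuousOn_empty f,
      hsC.trans (by simp)⟩
  · refine ⟨C ∘ Function.invFun e, fun j => hC _, fun j => hfC _, ?_⟩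
    exact hsC.trans ((Function.invFun_surjective e.injective).iUnion_comp C).ge

theorem isClosedDecomposable_of_locallyFinite {ι I : Type*} {t : Set X} {F : ι → Set (Set X)}
    (hcl : ∀ j, ∀ s ∈ F j, IsClosed s) (hlf : ∀ j, LocallyFinite fun s : F j => (s : Set X))
    (hcov : t ⊆ ⋃ j, ⋃₀ F j) (h : ∀ j, ∀ s ∈ F j, IsClosedDecomposable f I (t ∩ s)) :
    IsClosedDecomposable f (ι × I) t := by
  choose C hC hfC hsC using h
  have hlf' (p : ι × I) : LocallyFinite fun s : F p.1 => C p.1 s s.2 p.2 ∩ s :=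
    (hlf p.1).subset fun _ => inter_subset_right
  refine ⟨fun p => ⋃ s : F p.1, C p.1 s s.2 p.2 ∩ s, fun p => ?_, fun p => ?_, ?_⟩
  · exact (hlf' p).isClosed_iUnion fun s => (hC _ _ s.2 _).inter (hcl _ _ s.2)
  · exact (hlf' p).continuousOn_iUnion (fun s => (hC _ _ s.2 _).inter (hcl _ _ s.2))
      fun s => (hfC _ _ s.2 _).mono inter_subset_left
  · intro x hx
    obtain ⟨j, s, hs, hxs⟩ := mem_iUnion.1 (hcov hx)
    obtain ⟨i, hxi⟩ := mem_iUnion.1 (hsC j s hs ⟨hx, hxs⟩)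
    exact mem_iUnion.2 ⟨(j, i), mem_iUnion.2 ⟨⟨s, hs⟩, hxi, hxs⟩⟩

theorem isClosedDecomposable_of_iUnion {ι I : Type*} {t : Set X} {E : ι → Set X}
    (hcl : ∀ j, IsClosed (E j)) (hcov : t ⊆ ⋃ j, E j)
    (h : ∀ j, IsClosedDecomposable f I (t ∩ E j)) : IsClosedDecomposable f (ι × I) t :=
  isClosedDecomposable_of_locallyFinite (F := fun j => {E j})
    (fun j s hs => hs ▸ hcl j) (fun _ => locallyFinite_of_finite _)
    (by simpa only [sUnion_singleton] using hcov) fun j s hs => hs ▸ h j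

variable (X) in
def LargePseudocharacterLE (κ : Cardinal.{u}) : Prop :=
  ∀ F : Set X, IsClosed F → ∃ U : Set (Set X), (∀ u ∈ U, IsOpen u) ∧ #U ≤ κ ∧ F = ⋂₀ U

variable (X) in
def ParacompactnessNumberLE (κ : Cardinal.{u}) : Prop :=
  ∀ U : Set (Set X), (∀ u ∈ U, IsOpen u) → ⋃₀ U = univ →
    ∃ (ι : Type u) (F : ι → Set (Set X)), #ι ≤ κ ∧ (∀ i, ∀ s ∈ F i, IsClosed s) ∧
      (∀ i, LocallyFinite fun s : F i => (s : Set X)) ∧ (∀ i, ∀ s ∈ F i, ∃ u ∈ U, s ⊆ u) ∧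
      (⋃ i, ⋃₀ F i) = univ

variable {κ : Cardinal.{u}}

theorem IsClosedDecomposable.of_prod_out {ι : Type u} {s : Set X}
    (h : IsClosedDecomposable f (ι × κ.out) s) (hκ : ℵ₀ ≤ κ) (hι : #ι ≤ κ) :
    IsClosedDecomposable f κ.out s := by
  refine h.of_mk_le ?_
  simp only [Cardinal.mk_prod, Cardinal.lift_id, Cardinal.mk_out]
  exact (mul_le_mul_left hι κ).trans (Cardinal.mul_eq_self hκ).le

theorem isClosedDecomposable_of_inter_discDerivSeq_add_one_eq_empty
    (hΨ : LargePseudocharacterLE X κ) (hκ : ℵ₀ ≤ κ) {β : Ordinal.{u}}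
    (ih : ∀ s, IsClosed s → s ∩ discDerivSeq f β = ∅ → IsClosedDecomposable f κ.out s)
    {t : Set X} (ht : IsClosed t) (htβ : t ∩ discDerivSeq f (β + 1) = ∅) :
    IsClosedDecomposable f κ.out t := by
  have : Nonempty κ.out := Cardinal.nonempty_out (Cardinal.aleph0_pos.trans_le hκ).ne'
  obtain ⟨U, hUo, hUκ, hU⟩ := hΨ _ (isClosed_discDerivSeq (f := f) β)
  let E : Option U → Set X := fun o => o.elim (discDerivSeq f β) fun u => (u : Set X)ᶜ
  have hE : ∀ o, IsClosed (E o)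
    | none => isClosed_discDerivSeq β
    | some u => (hUo u u.2).isClosed_compl
  have hcov : t ⊆ ⋃ o, E o := fun x _ => by
    by_cases hx : x ∈ discDerivSeq f β
    · exact mem_iUnion.2 ⟨none, hx⟩
    · obtain ⟨u, hu, hxu⟩ : ∃ u ∈ U, x ∉ u := by simpa [hU] using hx
      exact mem_iUnion.2 ⟨some ⟨u, hu⟩, hxu⟩
  have hcont : ContinuousOn f (t ∩ discDerivSeq f β) := fun x hx => by
    refine (continuousWithinAt_of_notMem_discDeriv hx.2 fun hx' => ?_).mono inter_subset_right
    rw [← discDerivSeq_add_one] at hx'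
    exact htβ.subset ⟨hx.1, hx'⟩
  refine (isClosedDecomposable_of_iUnion (I := κ.out) hE hcov fun o => ?_).of_prod_out hκ ?_
  · cases o with
    | none => exact isClosedDecomposable_of_continuousOn (ht.inter (hE none)) hcont
    | some u =>
      refine ih _ (ht.inter (hE _)) (eq_empty_of_forall_notMem fun x hx => hx.1.2 ?_)
      exact (hU ▸ hx.2 : x ∈ ⋂₀ U) u u.2
  · rw [Cardinal.mk_option, ← Cardinal.add_one_eq hκ]
    gcongr

theorem isClosedDecomposable_of_inter_discDerivSeq_eq_empty_of_isSuccPrelimit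
    (hpar : ParacompactnessNumberLE X κ) (hκ : ℵ₀ ≤ κ) {α : Ordinal.{u}}
    (hα : Order.IsSuccPrelimit α)
    (ih : ∀ β < α, ∀ s, IsClosed s → s ∩ discDerivSeq f β = ∅ → IsClosedDecomposable f κ.out s)
    {t : Set X} (ht : IsClosed t) (htα : t ∩ discDerivSeq f α = ∅) :
    IsClosedDecomposable f κ.out t := by
  let 𝒰 : Set (Set X) := insert tᶜ (range fun β : Iio α => (discDerivSeq f (β + 1))ᶜ)
  have h𝒰o : ∀ u ∈ 𝒰, IsOpen u := by
    rintro u (rfl | ⟨β, rfl⟩)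
    · exact ht.isOpen_compl
    · exact (isClosed_discDerivSeq _).isOpen_compl
  have h𝒰c : ⋃₀ 𝒰 = univ := by
    refine eq_univ_of_forall fun x => ?_
    by_cases hx : x ∈ t
    · have hxα : x ∉ ⋂ β : Iio α, discDerivSeq f (β + 1) := fun hx' =>
        htα.subset ⟨hx, (discDerivSeq_eq_iInter_add_one α).ge hx'⟩
      obtain ⟨β, hβ⟩ : ∃ β : Iio α, x ∉ discDerivSeq f (β + 1) := by simpa using hxα
      exact ⟨_, Or.inr ⟨β, rfl⟩, hβ⟩
    · exact ⟨tᶜ, Or.inl rfl, hx⟩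
  obtain ⟨ι, F, hικ, hFcl, hFlf, hFref, hFcov⟩ := hpar 𝒰 h𝒰o h𝒰c
  refine (isClosedDecomposable_of_locallyFinite hFcl hFlf (hFcov ▸ subset_univ t)
    fun j s hs => ?_).of_prod_out hκ hικ
  obtain ⟨u, hu, hsu⟩ := hFref j s hs
  rcases hu with rfl | ⟨β, rfl⟩
  · rw [eq_empty_of_forall_notMem fun x (hx : x ∈ t ∩ s) => hsu hx.2 hx.1]
    exact isClosedDecomposable_empty
  · refine ih (β + 1) (hα.add_one_lt β.2) _ (ht.inter (hFcl j s hs)) ?_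
    exact eq_empty_of_forall_notMem fun x hx => hsu hx.1.2 hx.2

theorem isClosedDecomposable_of_inter_discDerivSeq_eq_empty
    (hΨ : LargePseudocharacterLE X κ) (hpar : ParacompactnessNumberLE X κ) (hκ : ℵ₀ ≤ κ)
    (α : Ordinal.{u}) :
    ∀ t, IsClosed t → t ∩ discDerivSeq f α = ∅ → IsClosedDecomposable f κ.out t := by
  induction α using Ordinal.limitRecOn with
  | zero =>
    exact fun t ht => isClosedDecomposable_of_inter_discDerivSeq_eq_empty_of_isSuccPrelimit
      hpar hκ Ordinal.isSuccPrelimit_zero (fun _ hβ => (not_lt_zero hβ).elim) ht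
  | add_one β ih =>
    exact fun t ht => isClosedDecomposable_of_inter_discDerivSeq_add_one_eq_empty hΨ hκ ih ht
  | limit α hα ih =>
    exact fun t ht => isClosedDecomposable_of_inter_discDerivSeq_eq_empty_of_isSuccPrelimit
      hpar hκ hα.isSuccPrelimit ih ht

end

theorem dec_le_of_psi_and_par
    {X : Type u} {Y : Type v} [TopologicalSpace X] [TopologicalSpace Y]
    (f : X → Y) (hwd : WeaklyDiscontinuous f)
    (κ : Cardinal.{u}) (hκ : Cardinal.aleph0 ≤ κ)
    -- (i) large pseudocharacter: every closed set is an intersection of ≤ κ open sets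
    (hΨ : ∀ F : Set X, IsClosed F →
      ∃ U : Set (Set X), (∀ u ∈ U, IsOpen u) ∧ Cardinal.mk U ≤ κ ∧ F = ⋂₀ U)
    -- (ii) paracompactness number: every open cover has a closed refinement that is
    -- the union of ≤ κ locally finite families of closed sets
    (hpar : ∀ U : Set (Set X), (∀ u ∈ U, IsOpen u) → ⋃₀ U = Set.univ →
      ∃ (ι : Type u) (F : ι → Set (Set X)),
        Cardinal.mk ι ≤ κ ∧
        (∀ i, ∀ s ∈ F i, IsClosed s) ∧
        (∀ i, LocallyFinite (fun s : F i => (s : Set X))) ∧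
        (∀ i, ∀ s ∈ F i, ∃ u ∈ U, s ⊆ u) ∧
        (⋃ i, ⋃₀ F i) = Set.univ) :
    ∃ C : Set (Set X), Cardinal.mk C ≤ κ ∧ (∀ c ∈ C, IsClosed c) ∧ ⋃₀ C = Set.univ ∧
      ∀ c ∈ C, ContinuousOn f c := by
  obtain ⟨δ, hδ⟩ := hwd.exists_discDerivSeq_eq_empty
  obtain ⟨C, hC, hfC, hcov⟩ := isClosedDecomposable_of_inter_discDerivSeq_eq_empty hΨ hpar hκ δ
    univ isClosed_univ (by rw [hδ, inter_empty])
  refine ⟨range C, Cardinal.mk_range_le.trans (Cardinal.mk_out κ).le, ?_,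
    sUnion_range C ▸ univ_subset_iff.1 hcov, ?_⟩
  · exact forall_mem_range.2 hC
  · exact forall_mem_range.2 hfC
end

section
/- Let X be a regular topological space and κ an infinite cardinal such that every subspace of X is κ-Lindelöf, i.e., every open cover of any subspace of X has a subcover of cardinality at most κ. Then for every weakly discontinuous map f : X → Y into a topological space Y there exists a cover C of X by closed subsets with |C| ≤ κ such that the restriction f|C is continuous for every C ∈ C. -/
/-!
Call `S` *κ-good* (`HasClosedContinuousCover f κ S`) if it is covered by at most `κ` closed
sets on each of which `f` is continuous. By hereditary κ-Lindelöfness the union `U` of all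
κ-good open sets is the union of `κ` of them, hence κ-good itself. If `U ≠ X`, weak
discontinuity applied to the closed set `A = Uᶜ` yields a point `x ∈ A` and, by regularity, a
closed neighbourhood `K` of `x` with `f` continuous on `K ∩ A`. Then
`interior K ⊆ (K ∩ A) ∪ U` is a κ-good open set containing `x`, contradicting `x ∉ U`.
-/

open Set Topology
open scoped Cardinal

universe u v

section

variable {X : Type u} {Y : Type v} [TopologicalSpace X] [TopologicalSpace Y]

theorem WeaklyDiscontinuous.exists_nhds_continuousWithinAt {f : X → Y}
    (hf : WeaklyDiscontinuous f) {A : Set X} (hA : A.Nonempty) :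
    ∃ x ∈ A, ∃ W ∈ 𝓝 x, ∀ y ∈ W ∩ A, ContinuousWithinAt f A y := by
  set D := {a : A | ¬ ContinuousWithinAt f A (a : X)}
  have hD : closure D ≠ univ := fun h => by
    have := hf A hA
    rw [IsNowhereDense, h, interior_univ] at this
    exact (@univ_nonempty _ hA.to_subtype).ne_empty this
  obtain ⟨a, ha⟩ := (ne_univ_iff_exists_notMem _).mp hD
  refine ⟨a, a.2, (closure (Subtype.val '' D))ᶜ,
    isClosed_closure.isOpen_compl.mem_nhds (closure_subtype.not.mp ha), ?_⟩
  rintro y ⟨hyW, hyA⟩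
  by_contra hy
  exact hyW (subset_closure ⟨⟨y, hyA⟩, hy, rfl⟩)

theorem WeaklyDiscontinuous.exists_isClosed_mem_nhds_continuousOn [RegularSpace X] {f : X → Y}
    (hf : WeaklyDiscontinuous f) {A : Set X} (hA : A.Nonempty) :
    ∃ x ∈ A, ∃ K ∈ 𝓝 x, IsClosed K ∧ ContinuousOn f (K ∩ A) := by
  obtain ⟨x, hxA, W, hW, hcont⟩ := hf.exists_nhds_continuousWithinAt hA
  obtain ⟨K, hK, hKc, hKW⟩ := exists_mem_nhds_isClosed_subset hW
  exact ⟨x, hxA, K, hK, hKc, fun y hy =>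
    (hcont y ⟨hKW hy.1, hy.2⟩).mono inter_subset_right⟩

def HasClosedContinuousCover (f : X → Y) (κ : Cardinal.{u}) (S : Set X) : Prop :=
  ∃ C : Set (Set X), #C ≤ κ ∧ (∀ c ∈ C, IsClosed c ∧ ContinuousOn f c) ∧ S ⊆ ⋃₀ C

namespace HasClosedContinuousCover

variable {f : X → Y} {κ : Cardinal.{u}}

theorem mono {S T : Set X} (hST : S ⊆ T) (hT : HasClosedContinuousCover f κ T) :
    HasClosedContinuousCover f κ S :=
  let ⟨C, hCκ, hC, hTC⟩ := hT
  ⟨C, hCκ, hC, hST.trans hTC⟩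

theorem union_of_isClosed (hκ : Cardinal.aleph0 ≤ κ) {K S : Set X} (hK : IsClosed K)
    (hfK : ContinuousOn f K) (hS : HasClosedContinuousCover f κ S) :
    HasClosedContinuousCover f κ (K ∪ S) := by
  obtain ⟨C, hCκ, hC, hSC⟩ := hS
  refine ⟨insert K C, ?_, ?_, ?_⟩
  · calc #(insert K C : Set (Set X)) ≤ #C + 1 := Cardinal.mk_insert_le
      _ ≤ κ + 1 := add_le_add_left hCκ 1
      _ = κ := Cardinal.add_one_eq hκ
  · rintro c (rfl | hc)
    exacts [⟨hK, hfK⟩, hC c hc]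
  · rintro x (hx | hx)
    · exact ⟨K, mem_insert K C, hx⟩
    · obtain ⟨c, hc, hxc⟩ := hSC hx
      exact ⟨c, mem_insert_of_mem K hc, hxc⟩

theorem sUnion (hκ : Cardinal.aleph0 ≤ κ) {𝒮 : Set (Set X)} (h𝒮κ : #𝒮 ≤ κ)
    (h𝒮 : ∀ S ∈ 𝒮, HasClosedContinuousCover f κ S) :
    HasClosedContinuousCover f κ (⋃₀ 𝒮) := by
  choose! C hCκ hC hSC using h𝒮
  refine ⟨⋃ S ∈ 𝒮, C S, ?_, ?_, ?_⟩
  · calc #(⋃ S ∈ 𝒮, C S) ≤ #𝒮 * ⨆ S : 𝒮, #(C S) := Cardinal.mk_biUnion_le C 𝒮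
      _ ≤ κ * κ := mul_le_mul' h𝒮κ (ciSup_le' fun S => hCκ S S.2)
      _ = κ := Cardinal.mul_eq_self hκ
  · intro c hc
    obtain ⟨S, hS, hcS⟩ := mem_iUnion₂.mp hc
    exact hC S hS c hcS
  · rintro x ⟨S, hS, hxS⟩
    obtain ⟨c, hc, hxc⟩ := hSC S hS hxS
    exact ⟨c, mem_iUnion₂.mpr ⟨S, hS, hc⟩, hxc⟩

theorem sUnion_isOpen (hκ : Cardinal.aleph0 ≤ κ)
    (hl : ∀ A : Set X, ∀ U : Set (Set X), (∀ u ∈ U, IsOpen u) → A ⊆ ⋃₀ U →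
      ∃ V ⊆ U, #V ≤ κ ∧ A ⊆ ⋃₀ V) :
    HasClosedContinuousCover f κ (⋃₀ {U | IsOpen U ∧ HasClosedContinuousCover f κ U}) := by
  obtain ⟨V, hVU, hVκ, hsub⟩ := hl _ {U | IsOpen U ∧ HasClosedContinuousCover f κ U}
    (fun _ hU => hU.1) subset_rfl
  exact (sUnion hκ hVκ fun S hS => (hVU hS).2).mono hsub

end HasClosedContinuousCover

theorem hasClosedContinuousCover_univ [RegularSpace X] {f : X → Y} (hf : WeaklyDiscontinuous f)
    {κ : Cardinal.{u}} (hκ : Cardinal.aleph0 ≤ κ)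
    (hl : ∀ A : Set X, ∀ U : Set (Set X), (∀ u ∈ U, IsOpen u) → A ⊆ ⋃₀ U →
      ∃ V ⊆ U, #V ≤ κ ∧ A ⊆ ⋃₀ V) :
    HasClosedContinuousCover f κ univ := by
  set U := ⋃₀ {U | IsOpen U ∧ HasClosedContinuousCover f κ U}
  have hU : HasClosedContinuousCover f κ U := .sUnion_isOpen hκ hl
  suffices hUuniv : U = univ from hUuniv ▸ hU
  by_contra hne
  obtain ⟨x, hxU, K, hK, hKc, hfK⟩ :=
    hf.exists_isClosed_mem_nhds_continuousOn (nonempty_compl.mpr hne)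
  have hUo : IsOpen U := isOpen_sUnion fun _ hV => hV.1
  have hKsub : interior K ⊆ (K ∩ Uᶜ) ∪ U := fun y hy =>
    (em (y ∈ U)).elim Or.inr fun hyU => Or.inl ⟨interior_subset hy, hyU⟩
  have hKgood : HasClosedContinuousCover f κ (interior K) :=
    (hU.union_of_isClosed hκ (hKc.inter hUo.isClosed_compl) hfK).mono hKsub
  exact hxU ⟨interior K, ⟨isOpen_interior, hKgood⟩, mem_interior_iff_mem_nhds.mpr hK⟩

end

theorem dec_le_of_hereditarily_kappa_Lindelof
    {X : Type u} {Y : Type v} [TopologicalSpace X] [TopologicalSpace Y]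
    [RegularSpace X]
    (κ : Cardinal.{u}) (hκ : Cardinal.aleph0 ≤ κ)
    -- every subspace of `X` is κ-Lindelöf
    (hl : ∀ A : Set X, ∀ U : Set (Set X), (∀ u ∈ U, IsOpen u) → A ⊆ ⋃₀ U →
      ∃ V ⊆ U, Cardinal.mk V ≤ κ ∧ A ⊆ ⋃₀ V)
    (f : X → Y) (hwd : WeaklyDiscontinuous f) :
    ∃ C : Set (Set X), Cardinal.mk C ≤ κ ∧ (∀ c ∈ C, IsClosed c) ∧ ⋃₀ C = Set.univ ∧
      ∀ c ∈ C, ContinuousOn f c := by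
  obtain ⟨C, hCκ, hC, hcov⟩ := hasClosedContinuousCover_univ hwd hκ hl
  exact ⟨C, hCκ, fun c hc => (hC c hc).1, univ_subset_iff.mp hcov, fun c hc => (hC c hc).2⟩
end

section
/- Let X be a topological space and Y a Hausdorff topological space. If a map f : X → Y is of the stable first Baire class, then f is piecewise continuous. -/
open Set Topology

/-- A map `f : X → Y` is *piecewise continuous* if `X` has a countable closed cover
such that the restriction of `f` to each member of the cover is continuous. -/
def PiecewiseContinuous {X Y : Type*} [TopologicalSpace X] [TopologicalSpace Y]
    (f : X → Y) : Prop :=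
  ∃ C : Set (Set X), C.Countable ∧ (∀ c ∈ C, IsClosed c) ∧ ⋃₀ C = Set.univ ∧
    ∀ c ∈ C, ContinuousOn f c

/-- A map `f : X → Y` is of the *stable first Baire class* if it is the stable limit of
a sequence of continuous maps: for every `x` the sequence is eventually equal to `f x`. -/
def StableFirstBaireClass {X Y : Type*} [TopologicalSpace X] [TopologicalSpace Y]
    (f : X → Y) : Prop :=
  ∃ F : ℕ → X → Y, (∀ n, Continuous (F n)) ∧
    ∀ x : X, ∃ n : ℕ, ∀ m ≥ n, F m x = f x

theorem piecewiseContinuous_of_stableFirstBaireClass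
    {X Y : Type*} [TopologicalSpace X] [TopologicalSpace Y] [T2Space Y]
    (f : X → Y) (hf : StableFirstBaireClass f) :
    PiecewiseContinuous f := by
  obtain ⟨F, hcont, hconv⟩ := hf
  refine ⟨range (fun n => ⋂ m, {x | F (n + m) x = F n x}), countable_range _, ?_, ?_, ?_⟩
  · rintro c ⟨n, rfl⟩
    exact isClosed_iInter fun m => isClosed_eq (hcont _) (hcont _)
  · ext x
    simp only [mem_sUnion, mem_range, mem_univ, iff_true]
    obtain ⟨n, hn⟩ := hconv x
    exact ⟨_, ⟨n, rfl⟩, mem_iInter.2 fun m => by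
      simp only [mem_setOf_eq]
      rw [hn _ (Nat.le_add_right n m), hn n le_rfl]⟩
  · rintro c ⟨n, rfl⟩
    have : EqOn f (F n) (⋂ m, {x | F (n + m) x = F n x}) := by
      intro x hx
      obtain ⟨k, hk⟩ := hconv x
      have h1 := mem_iInter.1 hx k
      simp only [mem_setOf_eq] at h1
      rw [← h1, hk _ (Nat.le_add_left k n)]
    exact (hcont n).continuousOn.congr this
end

section
/- Let X be a normal topological space and Y a path-connected topological space belonging to σAE(X). Then every piecewise continuous map f : X → Y is of the stable first Baire class. -/
open Set Topology

/-- The pair `(Y, B)` is an absolute extensor for `X`: every continuous map from a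
closed subspace of `X` into `B` extends to a continuous map from `X` to `Y`. -/
def PairAE (X : Type*) [TopologicalSpace X] {Y : Type*} [TopologicalSpace Y]
    (B : Set Y) : Prop :=
  ∀ (A : Set X), IsClosed A → ∀ g : A → Y, Continuous g → (∀ a : A, g a ∈ B) →
    ∃ G : X → Y, Continuous G ∧ ∀ a : A, G a = g a

/-- `Y` belongs to `σAE(X)`: `Y` has a countable cover by non-empty closed `Gδ`-sets
`Yₙ` with `(Y, Yₙ) ∈ AE(X)`. -/
def SigmaAE (X : Type*) [TopologicalSpace X] (Y : Type*) [TopologicalSpace Y] : Prop :=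
  ∃ Yn : ℕ → Set Y,
    (∀ n, (Yn n).Nonempty ∧ IsClosed (Yn n) ∧ IsGδ (Yn n) ∧ PairAE X (Yn n)) ∧
    (⋃ n, Yn n) = Set.univ

/-!
Write `Yₙ = ⋂ᵢ Oₙᵢ` with `Oₙᵢ` open. At stage `m` the closed sets
`Tₘₙ = Yₙ \ ⋃_{j<n} ⋂_{i≤m} Oⱼᵢ` are pairwise disjoint, and every `y` lies in `Tₘₙ` for all
large `m`, where `n` is least with `y ∈ Yₙ`. Pulling them back along `f` restricted to the
union `Kₘ` of the pieces `C₀, …, Cₘ` of `X` gives finitely many (`n ≤ m`) disjoint closed sets on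
which `f` is continuous with values in `Yₙ`. Separate them by disjoint open sets; the
extension property of `(Y, Yₙ)`, Urysohn's lemma and a path to a base point `y₀` extend `f`
from each piece to a map that is `y₀` off its open set, and these maps glue to a continuous
`Fₘ` that agrees with `f` on all pieces. The sequence `Fₘ` then converges stably to `f`.
-/

open Filter Function

section

variable {X Y : Type*} [TopologicalSpace X] [TopologicalSpace Y]

theorem PairAE.exists_continuous_extension {B : Set Y} (hB : PairAE X B) {A : Set X}
    (hA : IsClosed A) {f : X → Y} (hf : ContinuousOn f A) (hfB : MapsTo f A B) :
    ∃ G : X → Y, Continuous G ∧ EqOn G f A := by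
  obtain ⟨G, hG, hGf⟩ := hB A hA (A.domRestrict f) hf.domRestrict fun a => hfB a.2
  exact ⟨G, hG, fun x hx => hGf ⟨x, hx⟩⟩

/-- Urysohn's function `u` (`0` on `A`, `1` on `D`) lets us use the extension `G₀` of `f`
while `u ≤ 1/2` and a path from a point `b ∈ B` to `y` afterwards; `G₀` is made to equal `b`
on `{u ≥ 1/2}` so that the two halves match. -/
theorem PairAE.exists_continuous_extension_eqOn_const [NormalSpace X] [PathConnectedSpace Y]
    {B : Set Y} (hB : PairAE X B) (hBne : B.Nonempty) {A D : Set X} (hA : IsClosed A)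
    (hD : IsClosed D) (hAD : Disjoint A D) {f : X → Y} (hf : ContinuousOn f A)
    (hfB : MapsTo f A B) (y : Y) :
    ∃ G : X → Y, Continuous G ∧ EqOn G f A ∧ EqOn G (fun _ => y) D := by
  classical
  obtain ⟨b, hb⟩ := hBne
  obtain ⟨u, hu0, hu1, -⟩ := exists_continuous_zero_one_of_isClosed hA hD hAD
  set S : Set X := {x | 1 / 2 ≤ u x}
  have hS : IsClosed S := isClosed_le continuous_const u.continuous
  have hAS : Disjoint A S := disjoint_left.2 fun x hxA (hxS : 1 / 2 ≤ u x) => by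
    rw [show u x = 0 from hu0 hxA] at hxS
    norm_num at hxS
  set g : X → Y := A.piecewise f fun _ => b
  have hgA : EqOn g f A := fun x hx => piecewise_eq_of_mem _ _ _ hx
  have hgS : EqOn g (fun _ => b) S := fun x hx =>
    piecewise_eq_of_notMem _ _ _ (disjoint_right.1 hAS hx)
  have hg : ContinuousOn g (A ∪ S) :=
    (hf.congr hgA).union_of_isClosed (continuousOn_const.congr hgS) hA hS
  have hgB : MapsTo g (A ∪ S) B := by
    rintro x (hx | hx)
    · exact hgA hx ▸ hfB hx
    · exact hgS hx ▸ hb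
  obtain ⟨G₀, hG₀, hG₀g⟩ := hB.exists_continuous_extension (hA.union hS) hg hgB
  let p : Path b y := (PathConnectedSpace.joined b y).somePath
  refine ⟨fun x => if u x ≤ 1 / 2 then G₀ x else p.extend (2 * u x - 1), ?_, ?_, ?_⟩
  · refine hG₀.if_le (p.continuous_extend.comp (by fun_prop)) u.continuous continuous_const
      fun x hx => ?_
    have hxS : x ∈ S := hx.ge
    rw [hG₀g (Or.inr hxS), hgS hxS, hx]
    norm_num
  · intro x hx
    have hux : u x = 0 := hu0 hx
    simp only [hux, hG₀g (Or.inl hx), hgA hx]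
    norm_num
  · intro x hx
    have hux : u x = 1 := hu1 hx
    simp only [hux]
    norm_num

theorem exists_isOpen_pairwiseDisjoint_supersets [NormalSpace X] {ι : Type*} (s : Finset ι)
    {A : ι → Set X} (hA : ∀ i ∈ s, IsClosed (A i)) (hdisj : (s : Set ι).PairwiseDisjoint A) :
    ∃ U : ι → Set X, (∀ i, IsOpen (U i)) ∧ (∀ i ∈ s, A i ⊆ U i) ∧
      (s : Set ι).PairwiseDisjoint U := by
  have sep : ∀ i j, ∃ P Q : Set X, IsOpen P ∧ IsOpen Q ∧ A i ⊆ P ∧ A j ⊆ Q ∧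
      (i ∈ s → j ∈ s → i ≠ j → Disjoint P Q) := by
    intro i j
    by_cases h : i ∈ s ∧ j ∈ s ∧ i ≠ j
    · obtain ⟨P, Q, hP, hQ, hAP, hAQ, hPQ⟩ :=
        normal_separation (hA i h.1) (hA j h.2.1) (hdisj h.1 h.2.1 h.2.2)
      exact ⟨P, Q, hP, hQ, hAP, hAQ, fun _ _ _ => hPQ⟩
    · exact ⟨univ, univ, isOpen_univ, isOpen_univ, subset_univ _, subset_univ _,
        fun hi hj hij => (h ⟨hi, hj, hij⟩).elim⟩
  choose P Q hP hQ hAP hAQ hPQ using sep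
  refine ⟨fun i => ⋂ j ∈ s, P i j ∩ Q j i,
    fun i => isOpen_biInter_finset fun j _ => (hP i j).inter (hQ j i),
    fun i _ => subset_iInter₂ fun j _ => subset_inter (hAP i j) (hAQ j i),
    fun i hi j hj hij => (hPQ i j hi hj hij).mono ?_ ?_⟩
  · exact (biInter_subset_of_mem (Finset.mem_coe.1 hj)).trans inter_subset_left
  · exact (biInter_subset_of_mem (Finset.mem_coe.1 hi)).trans inter_subset_right

theorem exists_continuous_eqOn_of_pairwiseDisjoint_isOpen {ι : Type*} (y₀ : Y) (s : Finset ι)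
    {U : ι → Set X} (hU : ∀ i ∈ s, IsOpen (U i)) (hdisj : (s : Set ι).PairwiseDisjoint U)
    {G : ι → X → Y} (hG : ∀ i ∈ s, Continuous (G i))
    (hGy₀ : ∀ i ∈ s, EqOn (G i) (fun _ => y₀) (U i)ᶜ) :
    ∃ F : X → Y, Continuous F ∧ (∀ i ∈ s, EqOn F (G i) (U i)) ∧
      EqOn F (fun _ => y₀) (⋃ i ∈ s, U i)ᶜ := by
  classical
  induction s using Finset.induction_on with
  | empty => exact ⟨fun _ => y₀, continuous_const, by simp, fun _ _ => rfl⟩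
  | insert a s ha ih =>
    simp only [Finset.mem_insert, forall_eq_or_imp, Finset.coe_insert,
      pairwiseDisjoint_insert] at hU hG hGy₀ hdisj
    obtain ⟨F, hF, hFG, hFy₀⟩ := ih hU.2 hdisj.1 hG.2 hGy₀.2
    have hclosure : ∀ i ∈ s, Disjoint (U i) (closure (U a)) := fun i hi =>
      (hdisj.2 i hi (ne_of_mem_of_not_mem hi ha).symm).symm.closure_right (hU.2 i hi)
    refine ⟨(U a).piecewise (G a) F, hG.1.piecewise (fun x hx => ?_) hF, ?_, fun x hx => ?_⟩
    · rw [hU.1.frontier_eq] at hx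
      rw [hGy₀.1 hx.2, hFy₀]
      simp only [mem_compl_iff, mem_iUnion, not_exists]
      exact fun i hi hxi => disjoint_left.1 (hclosure i hi) hxi hx.1
    · simp only [Finset.mem_insert, forall_eq_or_imp]
      refine ⟨fun x hx => piecewise_eq_of_mem _ _ _ hx, fun i hi x hx => ?_⟩
      rw [piecewise_eq_of_notMem _ _ _ fun hxa =>
        disjoint_left.1 (hclosure i hi) hx (subset_closure hxa)]
      exact hFG i hi hx
    · simp only [Finset.mem_insert, iUnion_iUnion_eq_or_left, compl_union] at hx
      rw [piecewise_eq_of_notMem _ _ _ hx.1]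
      exact hFy₀ hx.2

theorem exists_continuous_eqOn_of_pairwiseDisjoint_isClosed [NormalSpace X]
    [PathConnectedSpace Y] {ι : Type*} (s : Finset ι) {A : ι → Set X} {B : ι → Set Y}
    {f : X → Y} (hA : ∀ i ∈ s, IsClosed (A i)) (hdisj : (s : Set ι).PairwiseDisjoint A)
    (hf : ∀ i ∈ s, ContinuousOn f (A i)) (hfB : ∀ i ∈ s, MapsTo f (A i) (B i))
    (hBne : ∀ i ∈ s, (B i).Nonempty) (hB : ∀ i ∈ s, PairAE X (B i)) :
    ∃ F : X → Y, Continuous F ∧ ∀ i ∈ s, EqOn F f (A i) := by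
  obtain ⟨y₀⟩ : Nonempty Y := PathConnectedSpace.nonempty
  obtain ⟨U, hU, hAU, hUdisj⟩ := exists_isOpen_pairwiseDisjoint_supersets s hA hdisj
  have hext : ∀ i ∈ s, ∃ G : X → Y, Continuous G ∧ EqOn G f (A i) ∧
      EqOn G (fun _ => y₀) (U i)ᶜ := fun i hi =>
    (hB i hi).exists_continuous_extension_eqOn_const (hBne i hi) (hA i hi)
      (hU i).isClosed_compl (disjoint_compl_right_iff_subset.2 (hAU i hi)) (hf i hi)
      (hfB i hi) y₀
  choose! G hG hGf hGy₀ using hext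
  obtain ⟨F, hF, hFG, -⟩ :=
    exists_continuous_eqOn_of_pairwiseDisjoint_isOpen y₀ s (fun i _ => hU i) hUdisj hG hGy₀
  exact ⟨F, hF, fun i hi x hx => (hFG i hi (hAU i hi hx)).trans (hGf i hi hx)⟩

theorem exists_isClosed_pairwiseDisjoint_eventually_mem {Yn : ℕ → Set Y}
    (hcl : ∀ n, IsClosed (Yn n)) (hGδ : ∀ n, IsGδ (Yn n)) (hcov : ⋃ n, Yn n = univ) :
    ∃ T : ℕ → ℕ → Set Y, (∀ m n, IsClosed (T m n)) ∧ (∀ m n, T m n ⊆ Yn n) ∧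
      (∀ m, Pairwise (Disjoint on (T m))) ∧ ∀ y, ∃ n, ∀ᶠ m in atTop, y ∈ T m n := by
  choose O hO hYO using fun n => (hGδ n).eq_iInter_nat
  set W : ℕ → ℕ → Set Y := fun m j => ⋂ i ∈ Finset.range (m + 1), O j i
  have hYW : ∀ m j, Yn j ⊆ W m j := fun m j =>
    (hYO j).subset.trans (subset_iInter₂ fun i _ => iInter_subset _ i)
  refine ⟨fun m n => Yn n \ ⋃ j < n, W m j, fun m n => (hcl n).sdiff
    (isOpen_biUnion fun j _ => isOpen_biInter_finset fun i _ => hO j i),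
    fun m n => sdiff_subset, fun m a b hab => ?_, fun y => ?_⟩
  · wlog hlt : a < b generalizing a b
    · exact (this b a hab.symm (lt_of_le_of_ne (not_lt.1 hlt) hab.symm)).symm
    refine disjoint_left.2 fun y hya hyb => hyb.2 ?_
    exact mem_biUnion hlt (hYW m a hya.1)
  · obtain ⟨n, hn, hmin⟩ := wellFounded_lt.has_min {n | y ∈ Yn n}
      (iUnion_eq_univ_iff.1 hcov y)
    refine ⟨n, ?_⟩
    have hlt : ∀ j ∈ Iio n, ∀ᶠ m in atTop, y ∉ W m j := by
      intro j hj
      obtain ⟨i, hi⟩ : ∃ i, y ∉ O j i := by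
        simpa [hYO j] using fun hy : y ∈ Yn j => hmin j hy hj
      filter_upwards [eventually_ge_atTop i] with m hm hyW
      exact hi (mem_iInter₂.1 hyW i (Finset.mem_range.2 (Nat.lt_succ_of_le hm)))
    filter_upwards [(eventually_all_finite (finite_Iio n)).2 hlt] with m hm
    exact ⟨hn, by simpa using hm⟩

theorem PiecewiseContinuous.exists_isClosed_eventually_mem {f : X → Y}
    (hf : PiecewiseContinuous f) :
    ∃ K : ℕ → Set X, (∀ m, IsClosed (K m)) ∧ (∀ m, ContinuousOn f (K m)) ∧
      ∀ x, ∀ᶠ m in atTop, x ∈ K m := by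
  obtain ⟨C, hC, hCcl, hCcov, hfC⟩ := hf
  obtain ⟨c, hc⟩ := (hC.insert ∅).exists_eq_range (insert_nonempty ∅ C)
  have hcC : ∀ k, c k = ∅ ∨ c k ∈ C := fun k => by
    rw [← mem_insert_iff, hc]
    exact mem_range_self k
  have hccl : ∀ k, IsClosed (c k) := fun k => (hcC k).elim (· ▸ isClosed_empty) (hCcl _)
  refine ⟨fun m => ⋃ k : Fin (m + 1), c k, fun m => isClosed_iUnion_of_finite fun k => hccl k,
    fun m => (locallyFinite_of_finite _).continuousOn_iUnion (fun k => hccl k)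
      fun k => (hcC k).elim (fun h => h ▸ continuousOn_empty f) (hfC _), fun x => ?_⟩
  obtain ⟨t, htC, hxt⟩ := mem_sUnion.1 (hCcov ▸ mem_univ x)
  obtain ⟨k, rfl⟩ : t ∈ range c := hc ▸ mem_insert_of_mem ∅ htC
  filter_upwards [eventually_ge_atTop k] with m hm
  exact mem_iUnion.2 ⟨⟨k, Nat.lt_succ_of_le hm⟩, hxt⟩

end

theorem stableFirstBaireClass_of_piecewiseContinuous
    {X Y : Type*} [TopologicalSpace X] [TopologicalSpace Y]
    [NormalSpace X] [PathConnectedSpace Y]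
    (hY : SigmaAE X Y)
    (f : X → Y) (hf : PiecewiseContinuous f) :
    StableFirstBaireClass f := by
  obtain ⟨Yn, hYn, hcov⟩ := hY
  obtain ⟨T, hTcl, hTY, hTdisj, hTev⟩ := exists_isClosed_pairwiseDisjoint_eventually_mem
    (fun n => (hYn n).2.1) (fun n => (hYn n).2.2.1) hcov
  obtain ⟨K, hKcl, hKf, hKev⟩ := hf.exists_isClosed_eventually_mem
  have stage : ∀ m, ∃ F : X → Y, Continuous F ∧
      ∀ n ∈ Finset.range (m + 1), EqOn F f (K m ∩ f ⁻¹' T m n) := fun m =>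
    exists_continuous_eqOn_of_pairwiseDisjoint_isClosed _
      (fun n _ => (hKf m).preimage_isClosed_of_isClosed (hKcl m) (hTcl m n))
      (fun a _ b _ hab => ((hTdisj m hab).preimage f).mono inter_subset_right inter_subset_right)
      (fun n _ => (hKf m).mono inter_subset_left) (fun n _ x hx => hTY m n hx.2)
      (fun n _ => (hYn n).1) (fun n _ => (hYn n).2.2.2)
  choose F hF hFf using stage
  refine ⟨F, hF, fun x => ?_⟩
  obtain ⟨n, hn⟩ := hTev (f x)
  obtain ⟨N, hN⟩ := eventually_atTop.1 ((hKev x).and (hn.and (eventually_ge_atTop n)))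
  exact ⟨N, fun m hm =>
    hFf m n (Finset.mem_range_succ_iff.2 (hN m hm).2.2) ⟨(hN m hm).1, (hN m hm).2.1⟩⟩
end

section
/- Let f : X → Y be a weakly Gδ-measurable map from a Baire space X to a regular Hausdorff space Y. Then the family {Int(cl(f⁻¹(y))) : y ∈ Y} is pairwise disjoint; that is, for any two distinct points y, z ∈ Y the intersection of the interior of the closure of f⁻¹(y) with the interior of the closure of f⁻¹(z) is empty. -/
open Set Topology

/-- A map `f : X → Y` is *weakly Gδ-measurable* if there is a regular countably additive
base `B` of the topology of `Y` such that the preimage of each member of `B` is a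
`Gδ`-set in `X`. -/
def WeaklyGdeltaMeasurable {X Y : Type*} [TopologicalSpace X] [TopologicalSpace Y]
    (f : X → Y) : Prop :=
  ∃ B : Set (Set Y),
    (∀ b ∈ B, IsOpen b) ∧
    -- `B` is a base of the topology of `Y`
    (∀ U : Set Y, IsOpen U → ∀ y ∈ U, ∃ b ∈ B, y ∈ b ∧ b ⊆ U) ∧
    -- `B` is regular
    (∀ U : Set Y, IsOpen U → ∀ y ∈ U, ∃ V ∈ B, ∃ W ∈ B, y ∈ V ∧ V ⊆ Wᶜ ∧ Wᶜ ⊆ U) ∧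
    -- `B` is countably additive
    (∀ S ⊆ B, S.Countable → ⋃₀ S ∈ B) ∧
    (∀ b ∈ B, IsGδ (f ⁻¹' b))

theorem interior_closure_fibers_disjoint
    {X Y : Type*} [TopologicalSpace X] [TopologicalSpace Y]
    [BaireSpace X] [RegularSpace Y] [T2Space Y]
    (f : X → Y) (hf : WeaklyGdeltaMeasurable f) :
    ∀ y z : Y, y ≠ z →
      interior (closure (f ⁻¹' {y})) ∩ interior (closure (f ⁻¹' {z})) = ∅ := by
  obtain ⟨B, hBopen, hBbase, -, -, hBGδ⟩ := hf
  intro y z hyz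
  by_contra hne
  obtain ⟨x, hx⟩ := nonempty_iff_ne_empty.2 hne
  set O : Set X := interior (closure (f ⁻¹' {y})) ∩ interior (closure (f ⁻¹' {z})) with hO
  have hOopen : IsOpen O := isOpen_interior.inter isOpen_interior
  -- separate y and z by disjoint open sets
  obtain ⟨U, V, hUopen, hVopen, hyU, hzV, hUV⟩ := t2_separation hyz
  obtain ⟨b, hbB, hyb, hbU⟩ := hBbase U hUopen y hyU
  obtain ⟨c, hcB, hzc, hcV⟩ := hBbase V hVopen z hzV
  -- the key density fact
  have key : ∀ w : Y, ∀ d : Set Y, w ∈ d → O ⊆ interior (closure (f ⁻¹' {w})) →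
      O ⊆ closure (f ⁻¹' d ∩ O) := by
    intro w d hwd hOsub t ht
    have h1 : t ∈ O ∩ closure (f ⁻¹' {w}) :=
      ⟨ht, interior_subset (hOsub ht)⟩
    have h2 : t ∈ closure (O ∩ f ⁻¹' {w}) := hOopen.inter_closure h1
    refine closure_mono ?_ h2
    rintro u ⟨huO, huw⟩
    exact ⟨by simp only [mem_preimage, mem_singleton_iff] at huw; simpa [huw], huO⟩
  have hb' : O ⊆ closure (f ⁻¹' b ∩ O) := key y b hyb inter_subset_left
  have hc' : O ⊆ closure (f ⁻¹' c ∩ O) := key z c hzc inter_subset_right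
  -- augment with the complement of `closure O` to get dense Gδ sets in `X`
  have hdense : ∀ G : Set X, O ⊆ closure (G ∩ O) → Dense (G ∪ (closure O)ᶜ) := by
    intro G hG t
    by_cases htO : t ∈ closure O
    · have : closure O ⊆ closure (G ∩ O) := by
        rw [← closure_closure (s := G ∩ O)]
        exact closure_mono hG
      exact closure_mono (inter_subset_left.trans subset_union_left) (this htO)
    · exact subset_closure (Or.inr htO)
  have hGδb : IsGδ (f ⁻¹' b ∪ (closure O)ᶜ) :=
    (hBGδ b hbB).union isClosed_closure.isOpen_compl.isGδ
  have hGδc : IsGδ (f ⁻¹' c ∪ (closure O)ᶜ) :=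
    (hBGδ c hcB).union isClosed_closure.isOpen_compl.isGδ
  have hD : Dense ((f ⁻¹' b ∪ (closure O)ᶜ) ∩ (f ⁻¹' c ∪ (closure O)ᶜ)) :=
    (hdense _ hb').inter_of_Gδ hGδb hGδc (hdense _ hc')
  obtain ⟨t, htbc, htO⟩ := hD.exists_mem_open hOopen ⟨x, hx⟩
  have htcl : t ∈ closure O := subset_closure htO
  have htb : f t ∈ b := htbc.1.resolve_right fun h => h htcl
  have htc : f t ∈ c := htbc.2.resolve_right fun h => h htcl
  exact hUV.ne_of_mem (hbU htb) (hcV htc) rfl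
end

section
/- Let X be a perfectly paracompact topological space that is not hereditarily Baire. Then there exist a topological space Y and a bijective map f : X → Y that is piecewise continuous but not scatteredly continuous. -/
/-! A closed subspace that is not Baire yields a nonempty locally closed set `A = ⋃ n, F n` with
every `F n` locally closed and nowhere dense in `A`. Let `q x` be `n + 1` for the least `n` with
`x ∈ F n`, and `0` off `A`. In a perfect space locally closed sets are Fσ, so every fibre of `q`
is a countable union of closed sets on each of which `q` is constant: as a map to discrete `ℕ`,
`q` is piecewise continuous. Yet `q|A` is continuous nowhere, since its fibres are nowhere dense
in `A`. For the topology on `X` pulled back from `ℕ` along `q`, the identity map of `X` inherits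
both properties from `q`. -/

open Set Topology

universe u

section Transfer

variable {X Y Z : Type*} [TopologicalSpace X] [TopologicalSpace Y] [TopologicalSpace Z]
  {f : X → Y} {g : Y → Z}

theorem Topology.IsInducing.piecewiseContinuous_iff (hg : IsInducing g) :
    PiecewiseContinuous (g ∘ f) ↔ PiecewiseContinuous f := by
  simp only [PiecewiseContinuous, hg.continuousOn_iff]

theorem Topology.IsInducing.scatteredlyContinuous_iff (hg : IsInducing g) :
    ScatteredlyContinuous (g ∘ f) ↔ ScatteredlyContinuous f := by
  simp only [ScatteredlyContinuous, hg.continuousWithinAt_iff]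

end Transfer

theorem exists_bijective_piecewiseContinuous_not_scatteredlyContinuous_of
    {X : Type u} {ι : Type*} [tX : TopologicalSpace X] [TopologicalSpace ι] {q : X → ι}
    (hpc : PiecewiseContinuous q) (hsc : ¬ ScatteredlyContinuous q) :
    ∃ (Y : Type u) (_ : TopologicalSpace Y) (f : X → Y),
      Function.Bijective f ∧ PiecewiseContinuous f ∧ ¬ ScatteredlyContinuous f := by
  let tY : TopologicalSpace X := .induced q ‹TopologicalSpace ι›
  have hq : @IsInducing X ι tY _ q := @IsInducing.induced X ι _ q
  exact ⟨X, tY, id, Function.bijective_id,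
    (@IsInducing.piecewiseContinuous_iff X X ι tX tY _ id q hq).1 hpc,
    fun h => hsc ((@IsInducing.scatteredlyContinuous_iff X X ι tX tY _ id q hq).2 h)⟩

/-- Fσ sets, encoded as complements of Gδ sets so that the closure properties of `IsGδ` apply. -/
def IsFσ {X : Type*} [TopologicalSpace X] (s : Set X) : Prop :=
  IsGδ sᶜ

section Fσ

variable {X : Type*} [TopologicalSpace X] {s t : Set X}

theorem IsClosed.isFσ (hs : IsClosed s) : IsFσ s :=
  hs.isOpen_compl.isGδ

theorem IsFσ.inter (hs : IsFσ s) (ht : IsFσ t) : IsFσ (s ∩ t) := by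
  rw [IsFσ, compl_inter]
  exact hs.union ht

theorem IsFσ.exists_iUnion_isClosed (hs : IsFσ s) :
    ∃ K : ℕ → Set X, (∀ n, IsClosed (K n)) ∧ ⋃ n, K n = s := by
  obtain ⟨U, hU, hsU⟩ := isGδ_iff_eq_iInter_nat.1 hs
  refine ⟨fun n => (U n)ᶜ, fun n => (hU n).isClosed_compl, ?_⟩
  rw [← compl_iInter, ← hsU, compl_compl]

theorem IsOpen.isFσ (hperf : ∀ C : Set X, IsClosed C → IsGδ C) (hs : IsOpen s) : IsFσ s :=
  hperf _ hs.isClosed_compl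

theorem IsLocallyClosed.isFσ (hperf : ∀ C : Set X, IsClosed C → IsGδ C)
    (hs : IsLocallyClosed s) : IsFσ s := by
  obtain ⟨U, C, hU, hC, rfl⟩ := hs
  exact (hU.isFσ hperf).inter hC.isFσ

theorem IsLocallyClosed.isFσ_compl (hperf : ∀ C : Set X, IsClosed C → IsGδ C)
    (hs : IsLocallyClosed s) : IsFσ sᶜ := by
  obtain ⟨U, C, hU, hC, rfl⟩ := hs
  rw [IsFσ, compl_compl]
  exact hU.isGδ.inter (hperf C hC)

end Fσ

theorem piecewiseContinuous_of_isFσ_preimage {X ι : Type*} [TopologicalSpace X]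
    [TopologicalSpace ι] [Countable ι] {q : X → ι} (hq : ∀ i, IsFσ (q ⁻¹' {i})) :
    PiecewiseContinuous q := by
  choose K hKc hKq using fun i => (hq i).exists_iUnion_isClosed
  refine ⟨range fun p : ι × ℕ => K p.1 p.2, countable_range _, ?_, ?_, ?_⟩
  · rintro _ ⟨p, rfl⟩
    exact hKc p.1 p.2
  · refine eq_univ_of_forall fun x => ?_
    have hx : x ∈ ⋃ n, K (q x) n := by rw [hKq]; rfl
    obtain ⟨n, hn⟩ := mem_iUnion.1 hx
    exact mem_sUnion_of_mem hn ⟨(q x, n), rfl⟩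
  · rintro _ ⟨⟨i, n⟩, rfl⟩
    exact continuousOn_const.congr fun x hx => (hKq i ▸ mem_iUnion_of_mem n hx : x ∈ q ⁻¹' {i})

theorem not_scatteredlyContinuous_of_preimage_notMem_nhdsWithin {X ι : Type*}
    [TopologicalSpace X] [TopologicalSpace ι] [DiscreteTopology ι] {q : X → ι} {A : Set X}
    (hA : A.Nonempty) (hq : ∀ a ∈ A, q ⁻¹' {q a} ∉ 𝓝[A] a) :
    ¬ ScatteredlyContinuous q := fun hsc => by
  obtain ⟨a, ha, hcont⟩ := hsc A hA
  exact hq a ha (hcont ((isOpen_discrete {q a}).mem_nhds rfl))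

open Classical in
noncomputable def firstIndex {X : Type*} (F : ℕ → Set X) (x : X) : ℕ :=
  if h : ∃ n, x ∈ F n then Nat.find h + 1 else 0

section FirstIndex

variable {X : Type*} (F : ℕ → Set X)

theorem preimage_firstIndex_zero : firstIndex F ⁻¹' {0} = (⋃ n, F n)ᶜ := by
  ext x
  simp [firstIndex]

theorem preimage_firstIndex_succ (n : ℕ) : firstIndex F ⁻¹' {n + 1} = disjointed F n := by
  classical
  ext x
  rw [disjointed_eq_inter_compl]
  simp only [firstIndex, mem_preimage, mem_singleton_iff]
  split_ifs with h
  · rw [add_left_inj, Nat.find_eq_iff]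
    simp
  · push Not at h
    simp [h n]

variable [TopologicalSpace X] {F}

theorem isFσ_preimage_firstIndex (hF : ∀ n, IsFσ (F n)) (hFc : ∀ n, IsFσ (F n)ᶜ)
    (hU : IsFσ (⋃ n, F n)ᶜ) : ∀ i, IsFσ (firstIndex F ⁻¹' {i})
  | 0 => by rwa [preimage_firstIndex_zero]
  | n + 1 => by
    rw [preimage_firstIndex_succ, disjointed_eq_inter_compl]
    refine (hF n).inter ?_
    simp only [IsFσ, compl_iInter, compl_compl]
    exact IsGδ.biUnion (finite_Iio n) fun j _ => by simpa [IsFσ] using hFc j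

theorem not_scatteredlyContinuous_firstIndex (hne : (⋃ n, F n).Nonempty)
    (hF : ∀ n, ∀ a ∈ ⋃ n, F n, F n ∉ 𝓝[⋃ n, F n] a) :
    ¬ ScatteredlyContinuous (firstIndex F) := by
  refine not_scatteredlyContinuous_of_preimage_notMem_nhdsWithin hne fun a ha => ?_
  have ha0 : a ∉ firstIndex F ⁻¹' {0} := by rwa [preimage_firstIndex_zero, notMem_compl_iff]
  obtain ⟨n, hn⟩ := Nat.exists_eq_succ_of_ne_zero ha0
  rw [hn, preimage_firstIndex_succ]
  exact fun h => hF n a ha (Filter.mem_of_superset h (disjointed_subset F n))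

end FirstIndex

section Baire

variable {X : Type*} [TopologicalSpace X]

theorem diff_notMem_nhdsWithin_of_subset_closure {A G : Set X} {a : X}
    (hA : A ⊆ closure (A ∩ G)) (ha : a ∈ A) : A \ G ∉ 𝓝[A] a := fun h => by
  obtain ⟨x, hxAG, hx⟩ := ((mem_closure_iff_frequently.1 (hA ha)).and_eventually
    (mem_nhdsWithin_iff_eventually.1 h)).exists
  exact (hx hxAG.1).2 hxAG.2

theorem exists_isOpen_of_not_baireSpace {C : Set X} (h : ¬ BaireSpace C) :
    ∃ (O : Set X) (G : ℕ → Set X), IsOpen O ∧ (C ∩ O).Nonempty ∧ (∀ n, IsOpen (G n)) ∧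
      (∀ n, C ⊆ closure (C ∩ G n)) ∧ Disjoint (C ∩ O) (⋂ n, G n) := by
  obtain ⟨g, hgo, hgd, hnd⟩ : ∃ g : ℕ → Set C,
      (∀ n, IsOpen (g n)) ∧ (∀ n, Dense (g n)) ∧ ¬ Dense (⋂ n, g n) := by
    by_contra! H
    exact h ⟨H⟩
  choose G hG hGg using fun n => isOpen_induced_iff.1 (hgo n)
  obtain ⟨U, hU, hUne, hUg⟩ : ∃ U : Set C, IsOpen U ∧ U.Nonempty ∧ U ∩ ⋂ n, g n = ∅ := by
    simpa [dense_iff_inter_open, not_nonempty_iff_eq_empty] using hnd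
  obtain ⟨O, hO, rfl⟩ := isOpen_induced_iff.1 hU
  refine ⟨O, G, hO, ?_, hG, fun n => ?_, ?_⟩
  · obtain ⟨⟨x, hxC⟩, hxO⟩ := hUne
    exact ⟨x, hxC, hxO⟩
  · simpa [← hGg n, Subtype.image_preimage_coe] using Subtype.dense_iff.1 (hgd n)
  · refine disjoint_left.2 fun x ⟨hxC, hxO⟩ hxG => ?_
    have : (⟨x, hxC⟩ : C) ∈ Subtype.val ⁻¹' O ∩ ⋂ n, g n :=
      ⟨hxO, mem_iInter.2 fun n => hGg n ▸ mem_iInter.1 hxG n⟩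
    rwa [hUg] at this

theorem exists_isLocallyClosed_iUnion_of_not_baireSpace {C : Set X} (hC : IsClosed C)
    (h : ¬ BaireSpace C) :
    ∃ F : ℕ → Set X, IsLocallyClosed (⋃ n, F n) ∧ (⋃ n, F n).Nonempty ∧
      (∀ n, IsLocallyClosed (F n)) ∧ ∀ n, ∀ a ∈ ⋃ n, F n, F n ∉ 𝓝[⋃ n, F n] a := by
  obtain ⟨O, G, hO, hne, hG, hGd, hdisj⟩ := exists_isOpen_of_not_baireSpace h
  have hCO : IsLocallyClosed (C ∩ O) := hC.isLocallyClosed.inter hO.isLocallyClosed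
  have hU : ⋃ n, (C ∩ O) \ G n = C ∩ O := by rw [← sdiff_iInter, sdiff_eq_left.2 hdisj]
  refine ⟨fun n => (C ∩ O) \ G n, ?_⟩
  rw [hU]
  refine ⟨hCO, hne, fun n => hCO.inter (hG n).isClosed_compl.isLocallyClosed,
    fun n a ha => diff_notMem_nhdsWithin_of_subset_closure ?_ ha⟩
  rintro x ⟨hxC, hxO⟩
  simpa only [inter_left_comm, inter_assoc] using hO.inter_closure ⟨hxO, hGd n hxC⟩

end Baire

theorem exists_piecewiseContinuous_not_scatteredlyContinuous_general
    {X : Type u} [TopologicalSpace X]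
    (hperf : ∀ C : Set X, IsClosed C → IsGδ C)
    (hnb : ¬ ∀ C : Set X, IsClosed C → BaireSpace C) :
    ∃ (Y : Type u) (_ : TopologicalSpace Y) (f : X → Y),
      Function.Bijective f ∧ PiecewiseContinuous f ∧ ¬ ScatteredlyContinuous f := by
  obtain ⟨C, hC, hCnb⟩ : ∃ C : Set X, IsClosed C ∧ ¬ BaireSpace C := by
    simpa using hnb
  obtain ⟨F, hU, hne, hF, hFU⟩ := exists_isLocallyClosed_iUnion_of_not_baireSpace hC hCnb
  have hpc : PiecewiseContinuous (firstIndex F) :=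
    piecewiseContinuous_of_isFσ_preimage <| isFσ_preimage_firstIndex
      (fun n => (hF n).isFσ hperf) (fun n => (hF n).isFσ_compl hperf) (hU.isFσ_compl hperf)
  exact exists_bijective_piecewiseContinuous_not_scatteredlyContinuous_of hpc
    (not_scatteredlyContinuous_firstIndex hne hFU)

theorem exists_piecewiseContinuous_not_scatteredlyContinuous
    {X : Type u} [TopologicalSpace X]
    [ParacompactSpace X]
    (hperf : ∀ C : Set X, IsClosed C → IsGδ C)
    (hnb : ¬ ∀ C : Set X, IsClosed C → BaireSpace C) :
    ∃ (Y : Type u) (_ : TopologicalSpace Y) (f : X → Y),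
      Function.Bijective f ∧ PiecewiseContinuous f ∧ ¬ ScatteredlyContinuous f :=
  exists_piecewiseContinuous_not_scatteredlyContinuous_general hperf hnb
end
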